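/- arXiv:math/0104145 — 5 statements merged into one kernel-verified Lean document; each statement's English description precedes it below -/
import Mathlib

section
/- Let f, g, h be formal power series with f(0) = 1, h(0) = 1, g(0) = 0, g'(0) = 1, and suppose \sum_{j \ge 0} a_j t^j = h(t) \sum_{i \ge 0} c_i f(t)^{m-i} g(t)^i as formal power series. Then c_i = \sum_j \alpha_{ij} a_j, where \alpha_{ij} = [t^0] \bigl( t^j h(t)^{-1} f(t)^{i-m} g(t)^{-i} ( t g'(t)/g(t) - t f'(t)/f(t) ) \bigr). -/
open PowerSeries

namespace Stmt5Aux

noncomputable section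

local notation "K" => LaurentSeries ℝ

lemma coe_inj : Function.Injective ((↑) : PowerSeries ℝ → K) :=
  HahnSeries.ofPowerSeries_injective

lemma coe_ne_zero {p : PowerSeries ℝ} (hp : p ≠ 0) : (p : K) ≠ 0 := by
  intro hc
  exact hp (coe_inj (by simpa using hc))

lemma ccne {p : PowerSeries ℝ} (hp : constantCoeff p = 1) : constantCoeff p ≠ 0 := by
  rw [hp]; exact one_ne_zero

lemma cKne {p : PowerSeries ℝ} (hp : constantCoeff p = 1) : (p : K) ≠ 0 := by
  apply coe_ne_zero
  intro hc
  rw [hc, map_zero] at hp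
  exact zero_ne_one hp

lemma coe_inv (p : PowerSeries ℝ) (hp : constantCoeff p ≠ 0) :
    ((p⁻¹ : PowerSeries ℝ) : K) = (p : K)⁻¹ := by
  have h1 : (p : K) * ((p⁻¹ : PowerSeries ℝ) : K) = 1 := by
    rw [← PowerSeries.coe_mul, PowerSeries.mul_inv_cancel p hp, PowerSeries.coe_one]
  exact (inv_eq_of_mul_eq_one_right h1).symm

/-- key combinatorial identity -/
lemma key (u : PowerSeries ℝ) (hu : constantCoeff u = 1) (d : ℕ) :
    coeff d (u ^ d * (1 - X * d⁄dX ℝ u * u⁻¹)) = if d = 0 then 1 else 0 := by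
  have hu0 : constantCoeff u ≠ 0 := ccne hu
  have hui : u⁻¹ * u = 1 := PowerSeries.inv_mul_cancel u hu0
  cases d with
  | zero =>
    simp only [pow_zero, one_mul, if_pos rfl, map_sub]
    rw [coeff_zero_eq_constantCoeff_apply, coeff_zero_eq_constantCoeff_apply]
    simp
  | succ n =>
    rw [if_neg (Nat.succ_ne_zero n)]
    have h1 : u ^ (n + 1) * (1 - X * d⁄dX ℝ u * u⁻¹)
        = u ^ (n + 1) - X * (d⁄dX ℝ u * u ^ n) := by
      have h : u⁻¹ * u ^ (n + 1) = u ^ n := by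
        rw [pow_succ', ← mul_assoc, hui, one_mul]
      calc u ^ (n + 1) * (1 - X * d⁄dX ℝ u * u⁻¹)
          = u ^ (n + 1) - X * d⁄dX ℝ u * (u⁻¹ * u ^ (n + 1)) := by ring
        _ = u ^ (n + 1) - X * (d⁄dX ℝ u * u ^ n) := by rw [h]; ring
    rw [h1, map_sub, coeff_succ_X_mul]
    have h2 : d⁄dX ℝ (u ^ (n + 1)) = (n + 1) • (u ^ n * d⁄dX ℝ u) := by
      rw [Derivation.leibniz_pow]
      simp [smul_smul, mul_comm]
    have h3 : coeff n (d⁄dX ℝ (u ^ (n + 1))) = coeff (n + 1) (u ^ (n + 1)) * (n + 1) :=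
      coeff_derivative _ _
    rw [h2, map_nsmul, nsmul_eq_mul] at h3
    have h5 : ((n + 1 : ℕ) : ℝ) ≠ 0 := by positivity
    rw [mul_comm (coeff (n+1) (u ^ (n+1)))] at h3
    push_cast at h3
    have h5' : ((n : ℝ) + 1) ≠ 0 := by positivity
    have heq : coeff n (u ^ n * d⁄dX ℝ u) = coeff (n + 1) (u ^ (n + 1)) :=
      mul_left_cancel₀ h5' h3
    rw [mul_comm (d⁄dX ℝ u) (u ^ n), heq]
    ring

/-- integer power of a unit power series, as a power series -/
def Fz (f : PowerSeries ℝ) (z : ℤ) : PowerSeries ℝ := f ^ z.toNat * f⁻¹ ^ (-z).toNat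

lemma cc_Fz {f : PowerSeries ℝ} (hf : constantCoeff f = 1) (z : ℤ) :
    constantCoeff (Fz f z) = 1 := by
  simp [Fz, map_mul, map_pow, PowerSeries.constantCoeff_inv, hf]

lemma coe_Fz {f : PowerSeries ℝ} (hf : constantCoeff f = 1) (z : ℤ) :
    ((Fz f z : PowerSeries ℝ) : K) = (f : K) ^ z := by
  have hfK : (f : K) ≠ 0 := cKne hf
  rw [Fz, PowerSeries.coe_mul, PowerSeries.coe_pow, PowerSeries.coe_pow, coe_inv f (ccne hf)]
  rw [← zpow_natCast (f : K), ← zpow_natCast ((f : K)⁻¹), inv_zpow, ← zpow_neg]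
  rw [← zpow_add₀ hfK]
  congr 1
  omega

def Pa (f h v : PowerSeries ℝ) (m : ℤ) (i : ℕ) : PowerSeries ℝ := h * Fz f (m - i) * v ^ i

def wa (f v : PowerSeries ℝ) : PowerSeries ℝ :=
  1 + X * d⁄dX ℝ v * v⁻¹ - X * d⁄dX ℝ f * f⁻¹

def qa (f h v : PowerSeries ℝ) (m : ℤ) (i : ℕ) : PowerSeries ℝ := (Pa f h v m i)⁻¹ * wa f v

variable {f h v : PowerSeries ℝ} {m : ℤ}

lemma cc_Pa (hf : constantCoeff f = 1) (hh : constantCoeff h = 1)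
    (hv : constantCoeff v = 1) (i : ℕ) : constantCoeff (Pa f h v m i) = 1 := by
  simp [Pa, map_mul, map_pow, hh, hv, cc_Fz hf]

lemma coe_Pa (hf : constantCoeff f = 1) (i : ℕ) :
    ((Pa f h v m i : PowerSeries ℝ) : K) = (h : K) * (f : K) ^ (m - (i : ℤ)) * (v : K) ^ i := by
  rw [Pa, PowerSeries.coe_mul, PowerSeries.coe_mul, coe_Fz hf, PowerSeries.coe_pow]

lemma single_zpow (z : ℤ) :
    ((HahnSeries.single (1 : ℤ) (1 : ℝ) : K)) ^ z = HahnSeries.single z (1 : ℝ) := by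
  have hn : ∀ n : ℕ, ((HahnSeries.single (1 : ℤ) (1 : ℝ) : K)) ^ n
      = HahnSeries.single (n : ℤ) (1 : ℝ) := by
    intro n
    rw [HahnSeries.single_pow]
    simp
  cases z with
  | ofNat n => rw [Int.ofNat_eq_coe, zpow_natCast, hn]
  | negSucc n =>
    rw [zpow_negSucc, hn]
    have hmul : (HahnSeries.single ((n + 1 : ℕ) : ℤ) (1 : ℝ) : K)
        * HahnSeries.single (Int.negSucc n) (1 : ℝ) = 1 := by
      rw [HahnSeries.single_mul_single, one_mul,
        show ((n + 1 : ℕ) : ℤ) + Int.negSucc n = 0 by rw [Int.negSucc_eq]; push_cast; ring]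
      exact HahnSeries.single_zero_one
    exact inv_eq_of_mul_eq_one_right hmul

lemma coe_X' : ((X : PowerSeries ℝ) : K) = HahnSeries.single (1 : ℤ) (1 : ℝ) :=
  PowerSeries.coe_X

lemma shift_coeff (p : PowerSeries ℝ) (s n : ℤ) :
    ((HahnSeries.single s (1 : ℝ) : K) * (p : K)).coeff n
      = if n - s < 0 then 0 else coeff (n - s).natAbs p := by
  rw [show n = n - s + s by ring]
  rw [HahnSeries.coeff_single_mul_add, one_mul]
  simp only [add_sub_cancel_right]
  exact PowerSeries.coeff_coe p (n - s)

lemma hAe (hf : constantCoeff f = 1) (hh : constantCoeff h = 1)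
    (hv : constantCoeff v = 1) (k : ℕ) :
    (h : K) * (f : K) ^ (m - (k : ℤ)) * ((X * v : PowerSeries ℝ) : K) ^ (k : ℤ)
      = HahnSeries.single (k : ℤ) (1 : ℝ) * ((Pa f h v m k : PowerSeries ℝ) : K) := by
  rw [zpow_natCast, ← PowerSeries.coe_pow, mul_pow, PowerSeries.coe_mul, PowerSeries.coe_pow,
    PowerSeries.coe_pow, coe_X', HahnSeries.single_pow, coe_Pa hf]
  simp only [nsmul_eq_mul, mul_one, one_pow]
  ring

set_option maxHeartbeats 1000000 in
lemma wa_eq (hf : constantCoeff f = 1) (hv : constantCoeff v = 1) :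
    wa f v = 1 - X * d⁄dX ℝ (f * v⁻¹) * (f * v⁻¹)⁻¹ := by
  have hfi : f⁻¹ * f = 1 := PowerSeries.inv_mul_cancel f (ccne hf)
  have hvi : v⁻¹ * v = 1 := PowerSeries.inv_mul_cancel v (ccne hv)
  have hcc : constantCoeff (f * v⁻¹) ≠ 0 := by
    simp [map_mul, hf, hv, PowerSeries.constantCoeff_inv]
  have hinv : (f * v⁻¹)⁻¹ = f⁻¹ * v := by
    symm
    rw [PowerSeries.eq_inv_iff_mul_eq_one hcc]
    calc f⁻¹ * v * (f * v⁻¹) = (f⁻¹ * f) * (v⁻¹ * v) := by ring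
      _ = 1 := by rw [hfi, hvi, mul_one]
  rw [hinv]
  have hder : d⁄dX ℝ (f * v⁻¹) = f * d⁄dX ℝ (v⁻¹) + v⁻¹ * d⁄dX ℝ f := by
    rw [Derivation.leibniz]; simp [smul_eq_mul]
  rw [hder, PowerSeries.derivative_inv']
  rw [wa]
  linear_combination (X * d⁄dX ℝ f * f⁻¹ - X * d⁄dX ℝ v * v⁻¹) * hvi +
    (-(X * d⁄dX ℝ v * v⁻¹ * v⁻¹ * v)) * hfi

set_option maxHeartbeats 1000000 in
lemma Pa_mul_qa (hf : constantCoeff f = 1) (hh : constantCoeff h = 1)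
    (hv : constantCoeff v = 1) {k i : ℕ} (hki : k ≤ i) :
    Pa f h v m k * qa f h v m i
      = (f * v⁻¹) ^ (i - k) * (1 - X * d⁄dX ℝ (f * v⁻¹) * (f * v⁻¹)⁻¹) := by
  have hP : Pa f h v m k * (Pa f h v m i)⁻¹ = (f * v⁻¹) ^ (i - k) := by
    apply coe_inj
    rw [PowerSeries.coe_mul, coe_inv _ (ccne (cc_Pa hf hh hv i)), PowerSeries.coe_pow,
      PowerSeries.coe_mul, coe_inv v (ccne hv), coe_Pa hf, coe_Pa hf]
    have hfK : (f : K) ≠ 0 := cKne hf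
    have hvK : (v : K) ≠ 0 := cKne hv
    have hhK : (h : K) ≠ 0 := cKne hh
    obtain ⟨d, rfl⟩ : ∃ d, i = k + d := ⟨i - k, by omega⟩
    rw [show k + d - k = d by omega]
    rw [← div_eq_mul_inv, div_eq_iff (by
      exact mul_ne_zero (mul_ne_zero hhK (zpow_ne_zero _ hfK)) (pow_ne_zero _ hvK))]
    have e1 : ((f:K) * ((v:K))⁻¹) ^ d * ((h:K) * (f:K) ^ (m - ((k + d : ℕ) : ℤ)) * (v:K) ^ (k + d))
        = (h:K) * ((f:K) ^ ((d:ℕ):ℤ) * (f:K) ^ (m - ((k + d : ℕ):ℤ))) * (v:K) ^ k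
          * (((v:K))⁻¹ * (v:K)) ^ d := by
      rw [mul_pow, mul_pow, zpow_natCast, pow_add]
      ring
    rw [e1, ← zpow_add₀ hfK, inv_mul_cancel₀ hvK, one_pow, mul_one,
      show ((d:ℕ):ℤ) + (m - ((k + d : ℕ):ℤ)) = m - (k:ℤ) by push_cast; ring]
  rw [qa, ← mul_assoc, hP, wa_eq hf hv]

set_option maxHeartbeats 1000000 in
lemma E_eq (hf : constantCoeff f = 1) (hh : constantCoeff h = 1)
    (hv : constantCoeff v = 1) (i j : ℕ) :
    (((PowerSeries.X : PowerSeries ℝ) : LaurentSeries ℝ) ^ (j : ℤ) *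
        ((h : LaurentSeries ℝ))⁻¹ * (f : LaurentSeries ℝ) ^ ((i : ℤ) - m) *
        ((X * v : PowerSeries ℝ) : LaurentSeries ℝ) ^ (-(i : ℤ)) *
        (((PowerSeries.X : PowerSeries ℝ) * PowerSeries.derivative ℝ (X * v) : PowerSeries ℝ) /
            ((X * v : PowerSeries ℝ) : LaurentSeries ℝ) -
          ((PowerSeries.X : PowerSeries ℝ) * PowerSeries.derivative ℝ f : PowerSeries ℝ) /
            (f : LaurentSeries ℝ)))
      = HahnSeries.single ((j : ℤ) - i) (1 : ℝ) *
          ((qa f h v m i : PowerSeries ℝ) : LaurentSeries ℝ) := by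
  have hfi : f⁻¹ * f = 1 := PowerSeries.inv_mul_cancel f (ccne hf)
  have hvi : v⁻¹ * v = 1 := PowerSeries.inv_mul_cancel v (ccne hv)
  have hXv : ((X * v : PowerSeries ℝ) : K) ≠ 0 := by
    apply coe_ne_zero
    intro hc
    have h1 : coeff 1 (X * v) = 0 := by rw [hc, map_zero]
    rw [show (1 : ℕ) = 0 + 1 from rfl, coeff_succ_X_mul,
      coeff_zero_eq_constantCoeff_apply, hv] at h1
    exact one_ne_zero h1
  have sub1 : ((X * d⁄dX ℝ (X * v) : PowerSeries ℝ) : K) / ((X * v : PowerSeries ℝ) : K)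
      = ((1 + X * d⁄dX ℝ v * v⁻¹ : PowerSeries ℝ) : K) := by
    rw [div_eq_iff hXv, ← PowerSeries.coe_mul]
    apply congrArg
    have hd : d⁄dX ℝ (X * v) = X * d⁄dX ℝ v + v := by
      rw [Derivation.leibniz]; simp [smul_eq_mul]
    rw [hd]
    linear_combination (-(X * X * d⁄dX ℝ v)) * hvi
  have sub2 : ((X * d⁄dX ℝ f : PowerSeries ℝ) : K) / (f : K)
      = ((X * d⁄dX ℝ f * f⁻¹ : PowerSeries ℝ) : K) := by
    rw [div_eq_iff (cKne hf), ← PowerSeries.coe_mul]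
    apply congrArg
    linear_combination (-(X * d⁄dX ℝ f)) * hfi
  rw [sub1, sub2, ← PowerSeries.coe_sub]
  have hwa : ((1 + X * d⁄dX ℝ v * v⁻¹ : PowerSeries ℝ) - X * d⁄dX ℝ f * f⁻¹ : PowerSeries ℝ)
      = wa f v := rfl
  rw [hwa]
  have hq : ((qa f h v m i : PowerSeries ℝ) : K)
      = (((Pa f h v m i : PowerSeries ℝ) : K))⁻¹ * ((wa f v : PowerSeries ℝ) : K) := by
    rw [qa, PowerSeries.coe_mul, coe_inv _ (ccne (cc_Pa hf hh hv i))]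
  rw [hq, coe_Pa hf, PowerSeries.coe_mul, coe_X']
  have hS1 : (HahnSeries.single (1 : ℤ) (1 : ℝ) : K) ≠ 0 :=
    HahnSeries.single_ne_zero one_ne_zero
  have hF : (f : K) ≠ 0 := cKne hf
  have hV : (v : K) ≠ 0 := cKne hv
  rw [← single_zpow ((j : ℤ) - i), mul_zpow]
  rw [show ((i : ℤ) - m) = -(m - (i : ℤ)) by ring, zpow_neg (f : K)]
  rw [show ((j : ℤ) - (i : ℤ)) = (j : ℤ) + (-(i : ℤ)) by ring,
    zpow_add₀ hS1, zpow_neg (v : K), zpow_natCast]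
  rw [mul_inv, mul_inv, zpow_natCast (v : LaurentSeries ℝ) i]
  ring

end

end Stmt5Aux

open Stmt5Aux in
/-- If `∑ aⱼ tʲ = h(t) ∑ᵢ cᵢ f(t)^(m-i) g(t)^i` with `f(0)=1`, `h(0)=1`, `g(0)=0`,
`g'(0)=1`, then `cᵢ = ∑ⱼ αᵢⱼ aⱼ`, where
`αᵢⱼ = [t⁰] tʲ h⁻¹ f^(i-m) g^(-i) (t g'/g − t f'/f)`.
Everything is interpreted in the field of formal Laurent series over `ℝ`;
the expansion identity is stated coefficientwise (noting `[tⁿ] g^i = 0` for `i > n`),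
and the sum `∑ⱼ αᵢⱼ aⱼ` is a `tsum` (only finitely many `αᵢⱼ` are nonzero). -/
theorem stmt_5 (f g h : PowerSeries ℝ) (m : ℤ)
    (hf0 : PowerSeries.constantCoeff f = 1)
    (hh0 : PowerSeries.constantCoeff h = 1)
    (hg0 : PowerSeries.constantCoeff g = 0)
    (hg1 : PowerSeries.coeff 1 g = 1)
    (a : ℕ → ℝ) (c : ℕ → ℝ)
    (hrel : ∀ n : ℕ, a n = ∑ i ∈ Finset.range (n + 1),
      c i * (((h : LaurentSeries ℝ) * (f : LaurentSeries ℝ) ^ (m - (i : ℤ)) *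
        (g : LaurentSeries ℝ) ^ (i : ℤ)).coeff (n : ℤ)))
    (α : ℕ → ℕ → ℝ)
    (hα : ∀ i j : ℕ, α i j =
      ((((PowerSeries.X : PowerSeries ℝ) : LaurentSeries ℝ) ^ (j : ℤ) * ((h : LaurentSeries ℝ))⁻¹ *
        (f : LaurentSeries ℝ) ^ ((i : ℤ) - m) * (g : LaurentSeries ℝ) ^ (-(i : ℤ)) *
        (((PowerSeries.X : PowerSeries ℝ) * PowerSeries.derivative ℝ g : PowerSeries ℝ) /
            (g : LaurentSeries ℝ) -
          ((PowerSeries.X : PowerSeries ℝ) * PowerSeries.derivative ℝ f : PowerSeries ℝ) /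
            (f : LaurentSeries ℝ))).coeff 0)) :
    ∀ i : ℕ, c i = ∑' j : ℕ, α i j * a j := by
  classical
  obtain ⟨v, hgv⟩ := PowerSeries.X_dvd_iff.mpr hg0
  subst hgv
  have hv0 : PowerSeries.constantCoeff v = 1 := by
    rwa [show (1 : ℕ) = 0 + 1 from rfl, coeff_succ_X_mul,
      coeff_zero_eq_constantCoeff_apply] at hg1
  -- the coefficient of `α`
  have hαval : ∀ i j : ℕ, α i j = if ((0 : ℤ) - ((j : ℤ) - i)) < 0 then 0
      else coeff ((0 : ℤ) - ((j : ℤ) - i)).natAbs (qa f h v m i) := by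
    intro i j
    rw [hα i j, E_eq hf0 hh0 hv0 i j, shift_coeff]
  have hαle : ∀ i j : ℕ, j ≤ i → α i j = coeff (i - j) (qa f h v m i) := by
    intro i j hji
    rw [hαval i j, if_neg (by omega),
      show ((0 : ℤ) - ((j : ℤ) - i)) = ((i - j : ℕ) : ℤ) by omega, Int.natAbs_natCast]
  have hαgt : ∀ i j : ℕ, i < j → α i j = 0 := by
    intro i j hij
    rw [hαval i j, if_pos (by omega)]
  -- the coefficients in the relation
  have hAc : ∀ (k n : ℕ), (((h : LaurentSeries ℝ) * (f : LaurentSeries ℝ) ^ (m - (k : ℤ)) *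
      ((X * v : PowerSeries ℝ) : LaurentSeries ℝ) ^ (k : ℤ)).coeff (n : ℤ))
      = if ((n : ℤ) - k) < 0 then 0 else coeff ((n : ℤ) - k).natAbs (Pa f h v m k) := by
    intro k n
    rw [hAe hf0 hh0 hv0 k, shift_coeff]
  have hrel2 : ∀ n : ℕ, a n = ∑ k ∈ Finset.range (n + 1),
      c k * (if ((n : ℤ) - k) < 0 then 0 else coeff ((n : ℤ) - k).natAbs (Pa f h v m k)) := by
    intro n
    rw [hrel n]
    exact Finset.sum_congr rfl fun k _ => by rw [hAc k n]
  intro i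
  -- orthogonality
  have horth : ∀ k : ℕ, k ≤ i → (∑ j ∈ Finset.range (i + 1), α i j *
      (if ((j : ℤ) - k) < 0 then 0 else coeff ((j : ℤ) - k).natAbs (Pa f h v m k)))
      = if i = k then 1 else 0 := by
    intro k hki
    have step1 : ∀ j ∈ Finset.range (i + 1), α i j *
        (if ((j : ℤ) - k) < 0 then 0 else coeff ((j : ℤ) - k).natAbs (Pa f h v m k))
        = if k ≤ j then coeff (i - j) (qa f h v m i) * coeff (j - k) (Pa f h v m k)
          else 0 := by
      intro j hj
      rw [Finset.mem_range] at hj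
      rw [hαle i j (by omega)]
      by_cases hkj : k ≤ j
      · rw [if_neg (by omega), if_pos hkj,
          show ((j : ℤ) - k) = ((j - k : ℕ) : ℤ) by omega, Int.natAbs_natCast]
      · rw [if_pos (by omega), if_neg hkj, mul_zero]
    rw [Finset.sum_congr rfl step1, ← Finset.sum_filter]
    have hfil : (Finset.range (i + 1)).filter (fun j => k ≤ j) = Finset.Ico k (i + 1) := by
      ext x
      simp only [Finset.mem_filter, Finset.mem_range, Finset.mem_Ico]
      omega
    rw [hfil, Finset.sum_Ico_eq_sum_range]
    have hrw : coeff (i - k) (Pa f h v m k * qa f h v m i) = if i - k = 0 then 1 else 0 := by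
      rw [Pa_mul_qa hf0 hh0 hv0 hki, key (f * v⁻¹) (by
        rw [map_mul, hf0, PowerSeries.constantCoeff_inv, hv0, inv_one, mul_one])]
    rw [PowerSeries.coeff_mul, Finset.Nat.sum_antidiagonal_eq_sum_range_succ_mk] at hrw
    rw [show i + 1 - k = i - k + 1 by omega]
    rw [show (if i = k then (1:ℝ) else 0) = if i - k = 0 then 1 else 0 by
      rcases eq_or_ne i k with hik | hik
      · rw [if_pos hik, if_pos (by omega)]
      · rw [if_neg hik, if_neg (by omega)]]
    rw [← hrw]
    apply Finset.sum_congr rfl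
    intro l hl
    rw [Finset.mem_range] at hl
    rw [show k + l - k = l by omega, show i - (k + l) = i - k - l by omega]
    ring
  -- assemble
  have hterm0 : ∀ j ∉ Finset.range (i + 1), α i j * a j = 0 := by
    intro j hj
    rw [Finset.mem_range] at hj
    rw [hαgt i j (by omega), zero_mul]
  rw [tsum_eq_sum hterm0]
  have expand : ∀ j ∈ Finset.range (i + 1), α i j * a j
      = ∑ k ∈ Finset.range (i + 1), c k * (α i j *
        (if ((j : ℤ) - k) < 0 then 0 else coeff ((j : ℤ) - k).natAbs (Pa f h v m k))) := by
    intro j hj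
    rw [Finset.mem_range] at hj
    rw [hrel2 j]
    have hext : ∑ k ∈ Finset.range (j + 1),
        c k * (if ((j : ℤ) - k) < 0 then 0 else coeff ((j : ℤ) - k).natAbs (Pa f h v m k))
        = ∑ k ∈ Finset.range (i + 1),
        c k * (if ((j : ℤ) - k) < 0 then 0 else coeff ((j : ℤ) - k).natAbs (Pa f h v m k)) := by
      apply Finset.sum_subset (Finset.range_subset_range.mpr (by omega))
      intro k hk hnk
      rw [Finset.mem_range] at hk hnk
      rw [if_pos (by omega), mul_zero]
    rw [hext, Finset.mul_sum]
    apply Finset.sum_congr rfl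
    intro k _
    ring
  rw [Finset.sum_congr rfl expand, Finset.sum_comm]
  have final : ∀ k ∈ Finset.range (i + 1), (∑ j ∈ Finset.range (i + 1), c k * (α i j *
      (if ((j : ℤ) - k) < 0 then 0 else coeff ((j : ℤ) - k).natAbs (Pa f h v m k))))
      = c k * (if i = k then 1 else 0) := by
    intro k hk
    rw [Finset.mem_range] at hk
    rw [← Finset.mul_sum, horth k (by omega)]
  rw [Finset.sum_congr rfl final]
  rw [Finset.sum_eq_single_of_mem i (Finset.self_mem_range_succ i)
    (fun b _ hb => by rw [if_neg (Ne.symm hb), mul_zero])]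
  rw [if_pos rfl, mul_one]
end

section
/- Under the hypotheses that f, g are real power series with f(0)=1, g(0)=0, g'(0)=1, f \succeq 0, f \not\equiv 1, 1/g \succeq 0, and Lg(t) = t g'(t)/g(t) has unique positive zero t_0 within the radius of convergence: there exists a unique t'_0 in (0, t_0) with f(t'_0)/g(t'_0) = f(t_0)/g(t_0), and moreover t'_0 < t_1, the unique local minimum of f/g on (0, t_0). -/
open Filter Topology

set_option maxHeartbeats 1600000

namespace Stmt12

lemma summable_shift {c : ℕ → ℝ} {R : ℝ}
    (hconv : ∀ t : ℝ, |t| < R → Summable fun n => c n * t ^ n)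
    {x : ℝ} (hx : |x| < R) :
    Summable fun n : ℕ => (n : ℝ) * c n * x ^ (n - 1) := by
  have habs : 0 ≤ |x| := abs_nonneg x
  obtain ⟨r, hxr, hrR⟩ : ∃ r, |x| < r ∧ r < R :=
    ⟨(|x| + R) / 2, by linarith, by linarith⟩
  have hr0 : 0 < r := lt_of_le_of_lt habs hxr
  have hsum : Summable fun n => |c n| * r ^ n := by
    have h := (hconv r (by rwa [abs_of_pos hr0])).abs
    simpa [abs_mul, abs_pow, abs_of_pos hr0] using h
  obtain ⟨M, hM⟩ := hsum.tendsto_atTop_zero.bddAbove_range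
  have hMb : ∀ n, |c n| * r ^ n ≤ M := fun n => hM (Set.mem_range_self n)
  rw [← summable_nat_add_iff 1]
  have hq : |x| / r < 1 := (div_lt_one hr0).2 hxr
  have hq0 : 0 ≤ |x| / r := div_nonneg habs hr0.le
  have hgeo : Summable fun n : ℕ => ((n : ℝ) + 1) * (|x| / r) ^ n := by
    have h1 := summable_pow_mul_geometric_of_norm_lt_one 1 (r := |x| / r)
      (by rwa [Real.norm_eq_abs, abs_of_nonneg hq0])
    have h2 : Summable fun n : ℕ => (|x| / r) ^ n :=
      summable_geometric_of_lt_one hq0 hq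
    simpa [pow_one, add_mul, one_mul] using h1.add h2
  apply Summable.of_norm_bounded (g := fun n : ℕ => (M / r) * (((n : ℝ) + 1) * (|x| / r) ^ n))
    (hgeo.mul_left _)
  intro n
  have hnorm : ‖((n + 1 : ℕ) : ℝ) * c (n + 1) * x ^ (n + 1 - 1)‖
      = ((n : ℝ) + 1) * (|c (n + 1)| * |x| ^ n) := by
    rw [Nat.add_sub_cancel]
    push_cast
    rw [Real.norm_eq_abs, abs_mul, abs_mul, abs_pow,
      abs_of_nonneg (by positivity : (0:ℝ) ≤ (n : ℝ) + 1)]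
    ring
  rw [hnorm]
  have h1 : |c (n + 1)| * |x| ^ n ≤ (M / r) * (|x| / r) ^ n := by
    have hc : |c (n + 1)| ≤ M / r ^ (n + 1) := by
      rw [le_div_iff₀ (by positivity)]; exact hMb (n + 1)
    calc |c (n + 1)| * |x| ^ n ≤ (M / r ^ (n + 1)) * |x| ^ n :=
          mul_le_mul_of_nonneg_right hc (by positivity)
      _ = (M / r) * (|x| / r) ^ n := by
          rw [div_pow, pow_succ]
          field_simp
  calc ((n : ℝ) + 1) * (|c (n + 1)| * |x| ^ n)
      ≤ ((n : ℝ) + 1) * ((M / r) * (|x| / r) ^ n) :=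
        mul_le_mul_of_nonneg_left h1 (by positivity)
    _ = (M / r) * (((n : ℝ) + 1) * (|x| / r) ^ n) := by ring

lemma hasDerivAt_S {c : ℕ → ℝ} {R : ℝ}
    (hconv : ∀ t : ℝ, |t| < R → Summable fun n => c n * t ^ n)
    {x : ℝ} (hx : |x| < R) :
    HasDerivAt (fun t : ℝ => ∑' n, c n * t ^ n)
      (∑' (n : ℕ), (n : ℝ) * c n * x ^ (n - 1)) x := by
  have habs := abs_nonneg x
  obtain ⟨r, hxr, hrR⟩ : ∃ r, |x| < r ∧ r < R :=
    ⟨(|x| + R) / 2, by linarith, by linarith⟩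
  have hr0 : 0 < r := lt_of_le_of_lt habs hxr
  have hrabs : |r| < R := by rwa [abs_of_pos hr0]
  have hu : Summable fun n : ℕ => (n : ℝ) * |c n| * r ^ (n - 1) := by
    have h := (summable_shift hconv hrabs).abs
    have heq : ∀ n : ℕ, |(n : ℝ) * c n * r ^ (n - 1)| = (n : ℝ) * |c n| * r ^ (n - 1) := by
      intro n
      rw [abs_mul, abs_mul, abs_pow, Nat.abs_cast, abs_of_pos hr0]
    simpa [heq] using h
  have hball : x ∈ Metric.ball (0 : ℝ) r := by
    simpa [Real.norm_eq_abs] using hxr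
  refine hasDerivAt_tsum_of_isPreconnected (g := fun n t => c n * t ^ n)
    (g' := fun (n : ℕ) (y : ℝ) => (n : ℝ) * c n * y ^ (n - 1)) hu Metric.isOpen_ball
    (convex_ball (0:ℝ) r).isPreconnected (fun n y hy => ?_) (fun n y hy => ?_)
    hball (hconv x hx) hball
  · have h := (hasDerivAt_pow n y).const_mul (c n)
    exact h.congr_deriv (by ring)
  · have hy' : |y| < r := by simpa [Real.norm_eq_abs] using hy
    rw [Real.norm_eq_abs, abs_mul, abs_mul, abs_pow, Nat.abs_cast]
    have : |y| ^ (n - 1) ≤ r ^ (n - 1) := pow_le_pow_left₀ (abs_nonneg y) hy'.le _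
    have hn : (0:ℝ) ≤ (n : ℝ) * |c n| := by positivity
    calc (n : ℝ) * |c n| * |y| ^ (n - 1) ≤ (n : ℝ) * |c n| * r ^ (n - 1) :=
      mul_le_mul_of_nonneg_left this hn
    

lemma summable_D {c : ℕ → ℝ} {R : ℝ}
    (hconv : ∀ t : ℝ, |t| < R → Summable fun n => c n * t ^ n)
    {x : ℝ} (hx : |x| < R) :
    Summable fun n : ℕ => (n : ℝ) * c n * x ^ n := by
  apply ((summable_shift hconv hx).mul_left x).congr
  intro n
  cases n with
  | zero => simp
  | succ m => rw [Nat.add_sub_cancel, pow_succ]; ring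

lemma D_eq {c : ℕ → ℝ} (t : ℝ) :
    (∑' (n : ℕ), (n : ℝ) * c n * t ^ n)
      = t * ∑' (n : ℕ), (n : ℝ) * c n * t ^ (n - 1) := by
  rw [← tsum_mul_left]
  apply tsum_congr
  intro n
  cases n with
  | zero => simp
  | succ m => rw [Nat.add_sub_cancel, pow_succ]; ring

lemma S_zero (c : ℕ → ℝ) : (∑' (n : ℕ), c n * (0:ℝ) ^ n) = c 0 := by
  rw [tsum_eq_single 0]
  · simp
  · intro n hn
    simp [zero_pow hn]

lemma D_zero (c : ℕ → ℝ) : (∑' (n : ℕ), (n : ℝ) * c n * (0:ℝ) ^ n) = 0 := by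
  rw [tsum_eq_single 0]
  · simp
  · intro n hn
    simp [zero_pow hn]

lemma term_le_S {c : ℕ → ℝ} (hc : ∀ n, 0 ≤ c n) {t : ℝ} (ht : 0 ≤ t)
    (hsum : Summable fun n => c n * t ^ n) (k : ℕ) :
    c k * t ^ k ≤ ∑' n, c n * t ^ n :=
  Summable.le_tsum hsum k (fun j _ => mul_nonneg (hc j) (pow_nonneg ht j))

lemma term_le_D {c : ℕ → ℝ} (hc : ∀ n, 0 ≤ c n) {t : ℝ} (ht : 0 ≤ t)
    (hsum : Summable fun n : ℕ => (n : ℝ) * c n * t ^ n) (k : ℕ) :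
    (k : ℝ) * c k * t ^ k ≤ ∑' (n : ℕ), (n : ℝ) * c n * t ^ n :=
  Summable.le_tsum hsum k (fun j _ => mul_nonneg (mul_nonneg (Nat.cast_nonneg j) (hc j)) (pow_nonneg ht j))

lemma sym_nonneg {s t : ℝ} (hs : 0 ≤ s) (hst : s ≤ t) {m n : ℕ} (hmn : m ≤ n) :
    0 ≤ ((n : ℝ) - (m : ℝ)) * (t ^ n * s ^ m - s ^ n * t ^ m) := by
  have ht : 0 ≤ t := hs.trans hst
  obtain ⟨k, rfl⟩ := Nat.exists_eq_add_of_le hmn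
  have h1 : (0:ℝ) ≤ ((m + k : ℕ) : ℝ) - (m : ℝ) := by push_cast; linarith
  apply mul_nonneg h1
  have hpow : s ^ k ≤ t ^ k := pow_le_pow_left₀ hs hst k
  have : t ^ (m + k) * s ^ m - s ^ (m + k) * t ^ m
      = t ^ m * s ^ m * (t ^ k - s ^ k) := by
    rw [pow_add, pow_add]; ring
  rw [this]
  exact mul_nonneg (mul_nonneg (pow_nonneg ht m) (pow_nonneg hs m)) (sub_nonneg.2 hpow)

lemma core_ineq {c : ℕ → ℝ} (hc : ∀ n, 0 ≤ c n) {s t : ℝ}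
    (hs : 0 ≤ s) (hst : s < t)
    (hAs : Summable fun n => c n * s ^ n) (hAt : Summable fun n => c n * t ^ n)
    (hDs : Summable fun n : ℕ => (n : ℝ) * c n * s ^ n)
    (hDt : Summable fun n : ℕ => (n : ℝ) * c n * t ^ n) :
    (∑' (n : ℕ), (n : ℝ) * c n * s ^ n) * (∑' n, c n * t ^ n)
      ≤ (∑' (n : ℕ), (n : ℝ) * c n * t ^ n) * (∑' n, c n * s ^ n) ∧
    (0 < c 0 → ∀ n0 : ℕ, 0 < n0 → 0 < c n0 →
      (∑' (n : ℕ), (n : ℝ) * c n * s ^ n) * (∑' n, c n * t ^ n)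
        < (∑' (n : ℕ), (n : ℝ) * c n * t ^ n) * (∑' n, c n * s ^ n)) := by
  have ht : 0 ≤ t := hs.trans hst.le
  set u1 : ℕ × ℕ → ℝ := fun p => ((p.1 : ℝ) * c p.1 * t ^ p.1) * (c p.2 * s ^ p.2) with hu1def
  set u2 : ℕ × ℕ → ℝ := fun p => ((p.1 : ℝ) * c p.1 * s ^ p.1) * (c p.2 * t ^ p.2) with hu2def
  have hn1 : ∀ n : ℕ, 0 ≤ (n : ℝ) * c n * t ^ n :=
    fun n => mul_nonneg (mul_nonneg (Nat.cast_nonneg n) (hc n)) (pow_nonneg ht n)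
  have hn2 : ∀ n : ℕ, 0 ≤ c n * s ^ n := fun n => mul_nonneg (hc n) (pow_nonneg hs n)
  have hn3 : ∀ n : ℕ, 0 ≤ (n : ℝ) * c n * s ^ n :=
    fun n => mul_nonneg (mul_nonneg (Nat.cast_nonneg n) (hc n)) (pow_nonneg hs n)
  have hn4 : ∀ n : ℕ, 0 ≤ c n * t ^ n := fun n => mul_nonneg (hc n) (pow_nonneg ht n)
  have hsu1 : Summable u1 := hDt.mul_of_nonneg hAs hn1 hn2
  have hsu2 : Summable u2 := hDs.mul_of_nonneg hAt hn3 hn4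
  have htsum1 : (∑' (n : ℕ), (n : ℝ) * c n * t ^ n) * (∑' n, c n * s ^ n) = ∑' p, u1 p := by
    exact tsum_mul_tsum_of_summable_norm
      (summable_norm_iff.mpr hDt) (summable_norm_iff.mpr hAs)
  have htsum2 : (∑' (n : ℕ), (n : ℝ) * c n * s ^ n) * (∑' n, c n * t ^ n) = ∑' p, u2 p := by
    exact tsum_mul_tsum_of_summable_norm
      (summable_norm_iff.mpr hDs) (summable_norm_iff.mpr hAt)
  set w : ℕ × ℕ → ℝ := fun p => u1 p - u2 p with hwdef
  have hsw : Summable w := hsu1.sub hsu2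
  have hsw' : Summable (fun p : ℕ × ℕ => w p.swap) :=
    (Equiv.prodComm ℕ ℕ).summable_iff.2 hsw
  have htw : (∑' (p : ℕ × ℕ), w p.swap) = ∑' (p : ℕ × ℕ), w p := (Equiv.prodComm ℕ ℕ).tsum_eq w
  set v : ℕ × ℕ → ℝ := fun p : ℕ × ℕ => w p + w p.swap with hvdef
  have hsv : Summable v := hsw.add hsw'
  have hveq : ∀ p : ℕ × ℕ, v p
      = c p.1 * c p.2 * (((p.1 : ℝ) - (p.2 : ℝ)) * (t ^ p.1 * s ^ p.2 - s ^ p.1 * t ^ p.2)) := by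
    intro ⟨n, m⟩
    simp only [hvdef, hwdef, hu1def, hu2def, Prod.swap]
    ring
  have hvnonneg : ∀ p : ℕ × ℕ, 0 ≤ v p := by
    intro ⟨n, m⟩
    rw [hveq]
    rcases le_total m n with h | h
    · exact mul_nonneg (mul_nonneg (hc n) (hc m)) (sym_nonneg hs hst.le h)
    · have := sym_nonneg hs hst.le h
      have hx : ((n : ℝ) - (m : ℝ)) * (t ^ n * s ^ m - s ^ n * t ^ m)
          = ((m : ℝ) - (n : ℝ)) * (t ^ m * s ^ n - s ^ m * t ^ n) := by ring
      rw [hx]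
      exact mul_nonneg (mul_nonneg (hc n) (hc m)) this
  have hvsum : (∑' p, v p) = 2 * ∑' p, w p := by
    rw [hvdef]
    rw [Summable.tsum_add hsw hsw', htw]
    ring
  have hwsum : (∑' p, w p)
      = (∑' (n : ℕ), (n : ℝ) * c n * t ^ n) * (∑' n, c n * s ^ n)
        - (∑' (n : ℕ), (n : ℝ) * c n * s ^ n) * (∑' n, c n * t ^ n) := by
    rw [htsum1, htsum2, hwdef, Summable.tsum_sub hsu1 hsu2]
  constructor
  · nlinarith [tsum_nonneg (L := SummationFilter.unconditional (ℕ × ℕ)) hvnonneg, hvsum, hwsum]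
  · intro hc0 n0 hn0 hcn0
    have hterm : 0 < v (n0, 0) := by
      rw [hveq]
      simp only
      have hp : s ^ n0 < t ^ n0 := pow_lt_pow_left₀ hst hs hn0.ne'
      have : t ^ n0 * s ^ 0 - s ^ n0 * t ^ 0 = t ^ n0 - s ^ n0 := by simp
      rw [this]
      have h1 : (0:ℝ) < (n0 : ℝ) - ((0:ℕ) : ℝ) := by
        simp only [Nat.cast_zero, sub_zero]
        exact_mod_cast hn0
      exact mul_pos (mul_pos hcn0 hc0) (mul_pos h1 (sub_pos.2 hp))
    have hle : v (n0, 0) ≤ ∑' p, v p := Summable.le_tsum hsv (n0, 0) (fun j _ => hvnonneg j)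
    nlinarith [hvsum, hwsum]

noncomputable def SS (c : ℕ → ℝ) (t : ℝ) : ℝ := ∑' n, c n * t ^ n
noncomputable def DD (c : ℕ → ℝ) (t : ℝ) : ℝ := ∑' (n : ℕ), (n : ℝ) * c n * t ^ n
noncomputable def EE (c : ℕ → ℝ) (t : ℝ) : ℝ := ∑' (n : ℕ), (n : ℝ) * c n * t ^ (n - 1)

section Master

variable {c F G b : ℕ → ℝ} {R t0 : ℝ}

lemma hasDerivAt_SS (hconv : ∀ t : ℝ, |t| < R → Summable fun n => c n * t ^ n)
    {x : ℝ} (hx : |x| < R) : HasDerivAt (SS c) (EE c x) x :=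
  hasDerivAt_S hconv hx

lemma contAt_SS (hconv : ∀ t : ℝ, |t| < R → Summable fun n => c n * t ^ n)
    {x : ℝ} (hx : |x| < R) : ContinuousAt (SS c) x :=
  (hasDerivAt_SS hconv hx).continuousAt

lemma contAt_DD (hconv : ∀ t : ℝ, |t| < R → Summable fun n => c n * t ^ n)
    {x : ℝ} (hx : |x| < R) : ContinuousAt (DD c) x :=
  (hasDerivAt_S (c := fun n => (n : ℝ) * c n)
    (fun t ht => summable_D hconv ht) hx).continuousAt

lemma DD_eq (t : ℝ) : DD c t = t * EE c t := D_eq t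

lemma SS_zero' (c : ℕ → ℝ) : SS c 0 = c 0 := S_zero c

lemma DD_zero' (c : ℕ → ℝ) : DD c 0 = 0 := D_zero c

theorem master (F G b : ℕ → ℝ) (R t0 : ℝ)
    (ht0 : 0 < t0) (ht0R : t0 < R)
    (hFconv : ∀ t : ℝ, |t| < R → Summable fun n => F n * t ^ n)
    (hGconv : ∀ t : ℝ, |t| < R → Summable fun n => G n * t ^ n)
    (hbconv : ∀ t : ℝ, |t| < R → Summable fun n => b n * t ^ n)
    (hF0 : F 0 = 1) (hG0 : G 0 = 0) (hG1 : G 1 = 1)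
    (hFpos : ∀ n, 0 ≤ F n) (hFne : ∃ n, 0 < n ∧ F n ≠ 0)
    (hbpos : ∀ n, 0 ≤ b n)
    (hbg : ∀ t : ℝ, |t| < R → SS b t * SS G t = t)
    (hLg0 : t0 * EE G t0 / SS G t0 = 0) :
    (∃! t0' : ℝ, t0' ∈ Set.Ioo 0 t0 ∧
      SS F t0' / SS G t0' = SS F t0 / SS G t0) ∧
    ∀ t0' t1 : ℝ,
      (t0' ∈ Set.Ioo 0 t0 ∧ SS F t0' / SS G t0' = SS F t0 / SS G t0) →
      (t1 ∈ Set.Ioo 0 t0 ∧ IsLocalMin (fun t : ℝ => SS F t / SS G t) t1) →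
      t0' < t1 := by
  obtain ⟨n0, hn0pos, hFn0ne⟩ := hFne
  have hFn0 : 0 < F n0 := (hFpos n0).lt_of_ne (Ne.symm hFn0ne)
  have hR0 : 0 < R := ht0.trans ht0R
  have habs : ∀ {u : ℝ}, 0 ≤ u → u < R → |u| < R := by
    intro u h1 h2
    rw [abs_of_nonneg h1]; exact h2
  have habs0 : |(0:ℝ)| < R := by simpa using hR0
  -- positivity of SS F
  have hSF1 : ∀ u : ℝ, 0 ≤ u → u < R → 1 ≤ SS F u := by
    intro u h1 h2
    have := term_le_S hFpos h1 (hFconv u (habs h1 h2)) 0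
    simpa [hF0, SS] using this
  have hSFpos : ∀ u : ℝ, 0 ≤ u → u < R → 0 < SS F u :=
    fun u h1 h2 => lt_of_lt_of_le one_pos (hSF1 u h1 h2)
  -- shifted series for G
  have hg'conv : ∀ t : ℝ, |t| < R → Summable fun n => G (n + 1) * t ^ n := by
    intro t ht
    rcases eq_or_ne t 0 with rfl | htne
    · apply summable_of_ne_finset_zero (s := {0})
      intro n hn
      have hn' : n ≠ 0 := by simpa using hn
      simp [zero_pow hn']
    · have h1 := (summable_nat_add_iff 1).2 (hGconv t ht)
      apply (h1.mul_left t⁻¹).congr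
      intro n
      field_simp [pow_succ]
      ring
  have hGshift : ∀ t : ℝ, |t| < R → SS G t = t * SS (fun n => G (n + 1)) t := by
    intro t ht
    rw [SS, Summable.tsum_eq_zero_add (hGconv t ht), SS, ← tsum_mul_left]
    rw [hG0]
    simp only [zero_mul, zero_add]
    exact tsum_congr fun n => by rw [pow_succ]; ring
  -- b 0 = 1
  have hb0 : b 0 = 1 := by
    have hcb : ContinuousAt (SS b) 0 := contAt_SS hbconv habs0
    have hcg : ContinuousAt (SS (fun n => G (n + 1))) 0 := contAt_SS hg'conv habs0
    have hq : Tendsto (fun t => SS b t * SS (fun n => G (n + 1)) t) (𝓝[>] (0:ℝ))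
        (𝓝 (b 0 * 1)) := by
      have : Tendsto (fun t => SS b t * SS (fun n => G (n + 1)) t) (𝓝 0)
          (𝓝 (SS b 0 * SS (fun n => G (n + 1)) 0)) := (hcb.mul hcg).tendsto
      rw [SS_zero', SS_zero', hG1] at this
      exact this.mono_left nhdsWithin_le_nhds
    have heq : ∀ᶠ t in 𝓝[>] (0:ℝ), SS b t * SS (fun n => G (n + 1)) t = 1 := by
      filter_upwards [Ioo_mem_nhdsGT_of_mem (Set.mem_Ico.2 ⟨le_rfl, hR0⟩)] with t ht
      have htR : |t| < R := habs ht.1.le ht.2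
      have h1 := hbg t htR
      rw [hGshift t htR] at h1
      have ht0' : t ≠ 0 := ne_of_gt ht.1
      have h2 : t * (SS b t * SS (fun n => G (n + 1)) t) = t * 1 := by
        linear_combination h1
      exact mul_left_cancel₀ ht0' h2
    have h2 : Tendsto (fun _ : ℝ => (1:ℝ)) (𝓝[>] (0:ℝ)) (𝓝 (b 0 * 1)) := hq.congr' heq
    have := tendsto_nhds_unique h2 tendsto_const_nhds
    linarith
  have hSb1 : ∀ u : ℝ, 0 ≤ u → u < R → 1 ≤ SS b u := by
    intro u h1 h2
    have := term_le_S hbpos h1 (hbconv u (habs h1 h2)) 0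
    simpa [hb0, SS] using this
  have hSbpos : ∀ u : ℝ, 0 ≤ u → u < R → 0 < SS b u :=
    fun u h1 h2 => lt_of_lt_of_le one_pos (hSb1 u h1 h2)
  have hSgpos : ∀ u : ℝ, 0 < u → u < R → 0 < SS G u := by
    intro u h1 h2
    have h3 := hbg u (habs h1.le h2)
    nlinarith [hSbpos u h1.le h2]
  -- psi
  set ψ : ℝ → ℝ := fun u => DD F u / SS F u + DD b u / SS b u - 1 with hψdef
  have hψcont : ∀ u : ℝ, 0 ≤ u → u < R → ContinuousAt ψ u := by
    intro u h1 h2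
    have ha := habs h1 h2
    exact (((contAt_DD hFconv ha).div (contAt_SS hFconv ha)
        (ne_of_gt (hSFpos u h1 h2))).add
      ((contAt_DD hbconv ha).div (contAt_SS hbconv ha)
        (ne_of_gt (hSbpos u h1 h2)))).sub continuousAt_const
  have hψ0 : ψ 0 = -1 := by
    rw [hψdef]
    simp [DD_zero', SS_zero', hF0, hb0]
  have hψmono : ∀ s t : ℝ, 0 < s → s < t → t < R → ψ s < ψ t := by
    intro s t hs hst htR
    have hsR : s < R := hst.trans htR
    have hF := core_ineq hFpos hs.le hst (hFconv s (habs hs.le hsR))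
      (hFconv t (habs (hs.trans hst).le htR))
      (summable_D hFconv (habs hs.le hsR)) (summable_D hFconv (habs (hs.trans hst).le htR))
    have hb' := core_ineq hbpos hs.le hst (hbconv s (habs hs.le hsR))
      (hbconv t (habs (hs.trans hst).le htR))
      (summable_D hbconv (habs hs.le hsR)) (summable_D hbconv (habs (hs.trans hst).le htR))
    have h1 : DD F s / SS F s < DD F t / SS F t := by
      rw [div_lt_div_iff₀ (hSFpos s hs.le hsR) (hSFpos t (hs.trans hst).le htR)]
      exact hF.2 (by rw [hF0]; exact one_pos) n0 hn0pos hFn0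
    have h2 : DD b s / SS b s ≤ DD b t / SS b t := by
      rw [div_le_div_iff₀ (hSbpos s hs.le hsR) (hSbpos t (hs.trans hst).le htR)]
      exact hb'.1
    show DD F s / SS F s + DD b s / SS b s - 1 < DD F t / SS F t + DD b t / SS b t - 1
    linarith
  -- product rule
  have hprodrule : ∀ u : ℝ, |u| < R → EE b u * SS G u + SS b u * EE G u = 1 := by
    intro u hu
    have h1 : HasDerivAt (fun t => SS b t * SS G t)
        (EE b u * SS G u + SS b u * EE G u) u :=
      (hasDerivAt_SS hbconv hu).mul (hasDerivAt_SS hGconv hu)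
    have h2 : (fun t : ℝ => SS b t * SS G t) =ᶠ[𝓝 u] (fun t => t) := by
      have hball : Set.Ioo (-R) R ∈ 𝓝 u := isOpen_Ioo.mem_nhds (abs_lt.1 hu)
      filter_upwards [hball] with t ht
      exact hbg t (abs_lt.2 ⟨ht.1, ht.2⟩)
    have h3 : HasDerivAt (fun t : ℝ => t) (EE b u * SS G u + SS b u * EE G u) u :=
      h1.congr_of_eventuallyEq h2.symm
    exact (h3.unique (hasDerivAt_id u)).symm ▸ rfl
  -- alternate formula for psi
  have hψalt : ∀ u : ℝ, 0 < u → u < R →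
      ψ u = u * EE F u / SS F u - u * EE G u / SS G u := by
    intro u hu huR
    have ha := habs hu.le huR
    have hSb := ne_of_gt (hSbpos u hu.le huR)
    have hSg := ne_of_gt (hSgpos u hu huR)
    have hSf := ne_of_gt (hSFpos u hu.le huR)
    have e1 := hbg u ha
    have e2 := hprodrule u ha
    have hnum : u * EE b u / SS b u + u * EE G u / SS G u = 1 := by
      field_simp
      linear_combination u * e2 - e1
    show DD F u / SS F u + DD b u / SS b u - 1 = _
    rw [DD_eq, DD_eq]
    linear_combination hnum
  -- derivative of phi
  set φ : ℝ → ℝ := fun t => SS F t / SS G t with hφdef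
  have hφD : ∀ u : ℝ, 0 < u → u < R →
      HasDerivAt φ (ψ u * SS F u / (u * SS G u)) u := by
    intro u hu huR
    have ha := habs hu.le huR
    have hSg := ne_of_gt (hSgpos u hu huR)
    have hSf := ne_of_gt (hSFpos u hu.le huR)
    have h1 := (hasDerivAt_SS hFconv ha).div (hasDerivAt_SS hGconv ha) hSg
    refine h1.congr_deriv ?_
    rw [hψalt u hu huR]
    field_simp
  have hφcont : ∀ u : ℝ, 0 < u → u < R → ContinuousAt φ u :=
    fun u hu huR => (hφD u hu huR).continuousAt
  -- psi at t0 is positive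
  have hψt0 : 0 < ψ t0 := by
    rw [hψalt t0 ht0 ht0R, hLg0, sub_zero, ← DD_eq]
    apply div_pos _ (hSFpos t0 ht0.le ht0R)
    have h5 : (n0 : ℝ) * F n0 * t0 ^ n0 ≤ DD F t0 :=
      term_le_D hFpos ht0.le (summable_D hFconv (habs ht0.le ht0R)) n0
    have hterm : 0 < (n0 : ℝ) * F n0 * t0 ^ n0 := by
      have : (0:ℝ) < (n0:ℝ) := by exact_mod_cast hn0pos
      positivity
    linarith
  -- the threshold t1
  set S : Set ℝ := {u : ℝ | u ∈ Set.Ioc 0 t0 ∧ ψ u ≤ 0} with hSdef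
  have hψneg0 : ∀ᶠ u in 𝓝[>] (0:ℝ), ψ u < 0 := by
    have h1 : Tendsto ψ (𝓝[>] (0:ℝ)) (𝓝 (-1)) := by
      have h2 := (hψcont 0 le_rfl hR0).tendsto
      rw [hψ0] at h2
      exact h2.mono_left nhdsWithin_le_nhds
    exact h1.eventually_lt_const (by norm_num)
  obtain ⟨s0, hs0mem, hs0neg⟩ : ∃ s0 : ℝ, s0 ∈ Set.Ioo 0 t0 ∧ ψ s0 < 0 := by
    have h2 : Set.Ioo (0:ℝ) t0 ∈ 𝓝[>] (0:ℝ) :=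
      Ioo_mem_nhdsGT_of_mem (Set.mem_Ico.2 ⟨le_rfl, ht0⟩)
    obtain ⟨s0, h3, h4⟩ := ((eventually_mem_set.2 h2).and hψneg0).exists
    exact ⟨s0, h3, h4⟩
  have hs0S : s0 ∈ S := ⟨⟨hs0mem.1, hs0mem.2.le⟩, hs0neg.le⟩
  have hSne : S.Nonempty := ⟨s0, hs0S⟩
  have hSbdd : BddAbove S := ⟨t0, fun u hu => hu.1.2⟩
  set t1 : ℝ := sSup S with ht1def
  have ht1pos : 0 < t1 := lt_of_lt_of_le hs0mem.1 (le_csSup hSbdd hs0S)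
  have ht1le : t1 ≤ t0 := csSup_le hSne fun u hu => hu.1.2
  have ht1R : t1 < R := lt_of_le_of_lt ht1le ht0R
  have ht1lt : t1 < t0 := by
    have h2 : ∀ᶠ u in 𝓝 t0, 0 < ψ u :=
      ((hψcont t0 ht0.le ht0R).tendsto).eventually_const_lt hψt0
    rw [Metric.eventually_nhds_iff] at h2
    obtain ⟨δ, hδ, h3⟩ := h2
    have h4 : t1 ≤ t0 - δ/2 := by
      apply csSup_le hSne
      intro u hu
      by_contra h5
      push_neg at h5
      have h6 : dist u t0 < δ := by
        rw [Real.dist_eq, abs_lt]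
        constructor <;> [linarith [hu.1.2]; linarith [hu.1.2]]
      exact absurd (h3 h6) (not_lt.2 hu.2)
    linarith
  have hψneg : ∀ u : ℝ, 0 < u → u < t1 → ψ u < 0 := by
    intro u hu hut1
    obtain ⟨v, hv, huv⟩ := exists_lt_of_lt_csSup hSne hut1
    exact lt_of_lt_of_le (hψmono u v hu huv (lt_of_le_of_lt hv.1.2 ht0R)) hv.2
  have hψpos : ∀ u : ℝ, t1 < u → u ≤ t0 → 0 < ψ u := by
    intro u h1 h2
    by_contra h
    push_neg at h
    have h3 : u ∈ S := ⟨⟨ht1pos.trans h1, h2⟩, h⟩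
    exact absurd (le_csSup hSbdd h3) (not_le.2 h1)
  -- monotonicity of φ
  have hanti : StrictAntiOn φ (Set.Ioc 0 t1) := by
    apply strictAntiOn_of_deriv_neg (convex_Ioc 0 t1)
    · intro u hu
      exact (hφcont u hu.1 (lt_of_le_of_lt hu.2 ht1R)).continuousWithinAt
    · intro u hu
      rw [interior_Ioc] at hu
      have huR : u < R := lt_trans hu.2 ht1R
      rw [(hφD u hu.1 huR).deriv]
      apply div_neg_of_neg_of_pos
      · exact mul_neg_of_neg_of_pos (hψneg u hu.1 hu.2) (hSFpos u hu.1.le huR)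
      · exact mul_pos hu.1 (hSgpos u hu.1 huR)
  have hmono : StrictMonoOn φ (Set.Icc t1 t0) := by
    apply strictMonoOn_of_deriv_pos (convex_Icc t1 t0)
    · intro u hu
      exact (hφcont u (lt_of_lt_of_le ht1pos hu.1) (lt_of_le_of_lt hu.2 ht0R)).continuousWithinAt
    · intro u hu
      rw [interior_Icc] at hu
      have hu0 : 0 < u := ht1pos.trans hu.1
      have huR : u < R := lt_trans hu.2 ht0R
      rw [(hφD u hu0 huR).deriv]
      apply div_pos
      · exact mul_pos (hψpos u hu.1 hu.2.le) (hSFpos u hu0.le huR)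
      · exact mul_pos hu0 (hSgpos u hu0 huR)
  have hφt1t0 : φ t1 < φ t0 := hmono ⟨le_rfl, ht1le⟩ ⟨ht1le, le_rfl⟩ ht1lt
  -- blow-up at 0
  have hφtop : Tendsto φ (𝓝[>] (0:ℝ)) atTop := by
    have hg0 : SS (fun n => G (n + 1)) 0 = 1 := by rw [SS_zero', hG1]
    have h1 : Tendsto (fun t : ℝ => SS F t / SS (fun n => G (n + 1)) t) (𝓝[>] (0:ℝ))
        (𝓝 1) := by
      have hcF : ContinuousAt (SS F) 0 := contAt_SS hFconv habs0
      have hcg : ContinuousAt (SS (fun n => G (n + 1))) 0 := contAt_SS hg'conv habs0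
      have h2 : Tendsto (fun t : ℝ => SS F t / SS (fun n => G (n + 1)) t) (𝓝 (0:ℝ))
          (𝓝 (SS F 0 / SS (fun n => G (n + 1)) 0)) :=
        (hcF.div hcg (by rw [hg0]; norm_num)).tendsto
      rw [SS_zero', hF0, hg0] at h2
      norm_num at h2
      exact h2.mono_left nhdsWithin_le_nhds
    have h2 : Tendsto (fun t : ℝ => t⁻¹) (𝓝[>] (0:ℝ)) atTop := tendsto_inv_nhdsGT_zero
    have h3 := Filter.Tendsto.pos_mul_atTop one_pos h1 h2
    apply h3.congr'
    filter_upwards [Ioo_mem_nhdsGT_of_mem (Set.mem_Ico.2 ⟨le_rfl, hR0⟩)] with t ht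
    have htR : |t| < R := habs ht.1.le ht.2
    have hshift := hGshift t htR
    have hne : SS (fun n => G (n + 1)) t ≠ 0 := by
      intro hzero
      rw [hzero, mul_zero] at hshift
      exact absurd hshift (ne_of_gt (hSgpos t ht.1 ht.2))
    show SS F t / SS (fun n => G (n + 1)) t * t⁻¹ = φ t
    rw [hφdef]
    simp only
    rw [hshift]
    ring
  -- choose ε
  obtain ⟨ε, hεmem, hεgt⟩ : ∃ ε : ℝ, ε ∈ Set.Ioo 0 t1 ∧ φ t0 < φ ε := by
    have h1 : Set.Ioo (0:ℝ) t1 ∈ 𝓝[>] (0:ℝ) :=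
      Ioo_mem_nhdsGT_of_mem (Set.mem_Ico.2 ⟨le_rfl, ht1pos⟩)
    obtain ⟨ε, h2, h3⟩ := ((eventually_mem_set.2 h1).and (hφtop.eventually_gt_atTop (φ t0))).exists
    exact ⟨ε, h2, h3⟩
  -- IVT
  have hφcontIcc : ContinuousOn φ (Set.Icc ε t1) := by
    intro u hu
    exact (hφcont u (lt_of_lt_of_le hεmem.1 hu.1) (lt_of_le_of_lt hu.2 ht1R)).continuousWithinAt
  have hsub := intermediate_value_Ioo' hεmem.2.le hφcontIcc
  obtain ⟨t0', ht0'mem, ht0'eq⟩ := hsub ⟨hφt1t0, hεgt⟩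
  have ht0'mem2 : t0' ∈ Set.Ioo 0 t0 :=
    ⟨hεmem.1.trans ht0'mem.1, lt_trans ht0'mem.2 ht1lt⟩
  have hsolt : ∀ y : ℝ, y ∈ Set.Ioo 0 t0 → φ y = φ t0 → y < t1 := by
    intro y hy hyeq
    by_contra h
    push_neg at h
    have h2 : φ y < φ t0 := hmono ⟨h, hy.2.le⟩ ⟨ht1le, le_rfl⟩ hy.2
    exact absurd hyeq (ne_of_lt h2)
  have huniq : ∀ y : ℝ, y ∈ Set.Ioo 0 t0 → φ y = φ t0 → y = t0' := by
    intro y hy hyeq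
    have h1 : y < t1 := hsolt y hy hyeq
    exact hanti.injOn ⟨hy.1, h1.le⟩ ⟨hεmem.1.trans ht0'mem.1, ht0'mem.2.le⟩
      (hyeq.trans ht0'eq.symm)
  refine ⟨⟨t0', ⟨ht0'mem2, ht0'eq⟩, fun y hy => huniq y hy.1 hy.2⟩, ?_⟩
  intro y t1' hy hmin
  have hy1 : y < t1 := hsolt y hy.1 hy.2
  have hd0 : deriv φ t1' = 0 := hmin.2.deriv_eq_zero
  have ht1'0 : 0 < t1' := hmin.1.1
  have ht1'R : t1' < R := lt_trans hmin.1.2 ht0R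
  rw [(hφD t1' ht1'0 ht1'R).deriv] at hd0
  have hψt1' : ψ t1' = 0 := by
    have hden : t1' * SS G t1' ≠ 0 := ne_of_gt (mul_pos ht1'0 (hSgpos t1' ht1'0 ht1'R))
    have h5 := (div_eq_zero_iff.1 hd0).resolve_right hden
    exact (mul_eq_zero.1 h5).resolve_right (ne_of_gt (hSFpos t1' ht1'0.le ht1'R))
  have h6 : t1 ≤ t1' := by
    by_contra h
    push_neg at h
    have := hψneg t1' ht1'0 h
    linarith
  linarith

end Master

end Stmt12

/-- Under the hypotheses of the previous lemma (real power series `f, g` convergent on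
a disc of radius `R > t₀`, `f(0)=1`, `g(0)=0`, `g'(0)=1`, `f ⪰ 0`, `f ≢ 1`,
`1/g ⪰ 0`, and `t₀` the unique positive zero of `Lg(t) = t g'(t)/g(t)` within the
disc), there is a unique `t₀' ∈ (0, t₀)` with `f(t₀')/g(t₀') = f(t₀)/g(t₀)`, and
moreover `t₀' < t₁` for any local minimum `t₁` of `f/g` on `(0, t₀)`. -/
theorem stmt_12 (F G b : ℕ → ℝ) (R t0 : ℝ)
    (ht0 : 0 < t0) (ht0R : t0 < R)
    (hFconv : ∀ t : ℝ, |t| < R → Summable fun n => F n * t ^ n)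
    (hGconv : ∀ t : ℝ, |t| < R → Summable fun n => G n * t ^ n)
    (hbconv : ∀ t : ℝ, |t| < R → Summable fun n => b n * t ^ n)
    (hF0 : F 0 = 1) (hG0 : G 0 = 0) (hG1 : G 1 = 1)
    (hFpos : ∀ n, 0 ≤ F n) (hFne : ∃ n, 0 < n ∧ F n ≠ 0)
    (hbpos : ∀ n, 0 ≤ b n)
    (hbg : ∀ t : ℝ, |t| < R →
      (∑' n, b n * t ^ n) * (∑' n, G n * t ^ n) = t)
    (hLg0 : t0 * deriv (fun t : ℝ => ∑' n, G n * t ^ n) t0 /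
      (∑' n, G n * t0 ^ n) = 0)
    (hLguniq : ∀ t : ℝ, 0 < t → t < R →
      t * deriv (fun u : ℝ => ∑' n, G n * u ^ n) t / (∑' n, G n * t ^ n) = 0 →
      t = t0) :
    (∃! t0' : ℝ, t0' ∈ Set.Ioo 0 t0 ∧
      (∑' n, F n * t0' ^ n) / (∑' n, G n * t0' ^ n) =
        (∑' n, F n * t0 ^ n) / (∑' n, G n * t0 ^ n)) ∧
    ∀ t0' t1 : ℝ,
      (t0' ∈ Set.Ioo 0 t0 ∧
        (∑' n, F n * t0' ^ n) / (∑' n, G n * t0' ^ n) =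
          (∑' n, F n * t0 ^ n) / (∑' n, G n * t0 ^ n)) →
      (t1 ∈ Set.Ioo 0 t0 ∧
        IsLocalMin (fun t : ℝ => (∑' n, F n * t ^ n) / (∑' n, G n * t ^ n)) t1) →
      t0' < t1 := by
  have habs : |t0| < R := by rw [abs_of_pos ht0]; exact ht0R
  have hderiv : deriv (fun t : ℝ => ∑' n, G n * t ^ n) t0 = Stmt12.EE G t0 :=
    (Stmt12.hasDerivAt_S hGconv habs).deriv
  rw [hderiv] at hLg0
  exact Stmt12.master F G b R t0 ht0 ht0R hFconv hGconv hbconv hF0 hG0 hG1 hFpos hFne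
    hbpos hbg hLg0
end

section
/- Let F(t), G(t) be real power series convergent on |t| < r with G having nonnegative coefficients, G(0) > 0, G'(0) > 0. Let I be a compact subset of [0, r) on which F is positive. Then for all sufficiently large l, the function a \mapsto F(a) G(a)^l + F(-a) G(-a)^l is positive on I. -/
/-!
Put `f(t) = ∑ Fₙ tⁿ` and `g(t) = ∑ Gₙ tⁿ`. Since the coefficients of `g` are nonnegative with
`G₀, G₁ > 0`, we have `|g(-a)| < g(a)` for every `a > 0`, so for `a > 0` the term `f(a) g(a)^l`
dominates `f(-a) g(-a)^l` as `l → ∞`, uniformly near `a`; near `a = 0` both terms are positive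
for every `l`. Compactness of `I` turns these local statements into a uniform one.
-/

open Filter Topology Set

theorem IsCompact.eventually_forall_of_forall_eventually_prod_nhds {X Y : Type*}
    [TopologicalSpace X] {K : Set X} (hK : IsCompact K) {l : Filter Y} {P : Y → X → Prop}
    (hP : ∀ x ∈ K, ∀ᶠ z in l ×ˢ 𝓝 x, P z.1 z.2) :
    ∀ᶠ y in l, ∀ x ∈ K, P y x :=
  (Eventually.curry (hK.mem_prod_nhdsSet_of_forall hP)).mono fun _ h ↦ h.self_of_nhdsSet

section PowerSeries

variable {c : ℕ → ℝ} {r : ℝ}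

theorem continuousAt_tsum_mul_pow (hc : ∀ t : ℝ, |t| < r → Summable fun n => c n * t ^ n)
    {t : ℝ} (ht : |t| < r) : ContinuousAt (fun s => ∑' n, c n * s ^ n) t := by
  obtain ⟨ρ, htρ, hρr⟩ := exists_between ht
  have hρ : |ρ| < r := by rwa [abs_of_pos ((abs_nonneg t).trans_lt htρ)]
  have hnhds : Icc (-ρ) ρ ∈ 𝓝 t := Icc_mem_nhds (abs_lt.1 htρ).1 (abs_lt.1 htρ).2
  refine (continuousOn_tsum (fun n => by fun_prop) (hc ρ hρ).abs fun n s hs => ?_).continuousAt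
    hnhds
  rw [Real.norm_eq_abs, abs_mul, abs_mul, abs_pow, abs_pow]
  gcongr ?_ * ?_ ^ n
  exact (abs_le.2 hs).trans (le_abs_self ρ)

variable (hc : ∀ n, 0 ≤ c n) {a : ℝ} (hs : Summable fun n => c n * a ^ n)
include hc hs

theorem tsum_mul_pow_pos_of_nonneg (hc0 : 0 < c 0) (ha : 0 ≤ a) : 0 < ∑' n, c n * a ^ n :=
  hs.tsum_pos (fun n => mul_nonneg (hc n) (pow_nonneg ha n)) 0 (by simpa using hc0)

theorem abs_tsum_mul_neg_pow_lt (hs' : Summable fun n => c n * (-a) ^ n) (hc0 : 0 < c 0)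
    (hc1 : 0 < c 1) (ha : 0 < a) :
    |∑' n, c n * (-a) ^ n| < ∑' n, c n * a ^ n := by
  have hbound (n : ℕ) : |(-a) ^ n| ≤ a ^ n := by rw [abs_pow, abs_neg, abs_of_pos ha]
  have hsum : 0 < ∑' n, (c n * (-a) ^ n + c n * a ^ n) := by
    refine (hs'.add hs).tsum_pos (fun n => ?_) 0 (by simpa using add_pos hc0 hc0)
    rw [← mul_add]
    exact mul_nonneg (hc n) (by linarith [(abs_le.1 (hbound n)).1])
  have hdiff : 0 < ∑' n, (c n * a ^ n - c n * (-a) ^ n) := by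
    refine (hs.sub hs').tsum_pos (fun n => ?_) 1
      (by rw [pow_one, pow_one]; linarith [mul_pos hc1 ha])
    rw [← mul_sub]
    exact mul_nonneg (hc n) (by linarith [(abs_le.1 (hbound n)).2])
  rw [hs'.tsum_add hs] at hsum
  rw [hs.tsum_sub hs'] at hdiff
  exact abs_lt.2 ⟨by linarith, by linarith⟩

end PowerSeries

section Domination

variable {X : Type*} [TopologicalSpace X] {A B C D : X → ℝ} {x : X}
  (hA : ContinuousAt A x) (hB : ContinuousAt B x) (hC : ContinuousAt C x)
  (hD : ContinuousAt D x)
include hA hB hC hD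

theorem eventually_pos_mul_pow_add_mul_pow_of_pos (hAx : 0 < A x) (hBx : 0 < B x)
    (hCx : 0 < C x) (hDx : 0 < D x) :
    ∀ᶠ z in (atTop : Filter ℕ) ×ˢ 𝓝 x, 0 < A z.2 * B z.2 ^ z.1 + C z.2 * D z.2 ^ z.1 := by
  filter_upwards [(hA.eventually (lt_mem_nhds hAx)).prod_inr atTop,
    (hB.eventually (lt_mem_nhds hBx)).prod_inr atTop,
    (hC.eventually (lt_mem_nhds hCx)).prod_inr atTop,
    (hD.eventually (lt_mem_nhds hDx)).prod_inr atTop] with z hAz hBz hCz hDz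
  positivity

theorem eventually_pos_mul_pow_add_mul_pow_of_abs_lt (hAx : 0 < A x) (hBx : 0 < B x)
    (hDx : |D x| < B x) :
    ∀ᶠ z in (atTop : Filter ℕ) ×ˢ 𝓝 x, 0 < A z.2 * B z.2 ^ z.1 + C z.2 * D z.2 ^ z.1 := by
  obtain ⟨θ, hθ, hθ1⟩ := exists_between ((div_lt_one hBx).2 hDx)
  have hθ0 : 0 ≤ θ := (div_nonneg (abs_nonneg _) hBx.le).trans hθ.le
  have hpow : ∀ᶠ l in atTop, (|C x| + 1) * θ ^ l < A x / 2 := by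
    refine Tendsto.eventually_lt_const (by positivity) ?_
    simpa using (tendsto_pow_atTop_nhds_zero_of_lt_one hθ0 hθ1).const_mul (|C x| + 1)
  have hratio : ∀ᶠ y in 𝓝 x, |D y| / B y < θ :=
    (hD.abs.div hB hBx.ne').eventually (gt_mem_nhds hθ)
  filter_upwards [hpow.prod_mk ((hA.eventually (lt_mem_nhds (half_lt_self hAx))).and
    ((hB.eventually (lt_mem_nhds hBx)).and
    ((hC.abs.eventually (gt_mem_nhds (lt_add_one |C x|))).and hratio)))]
  rintro ⟨l, y⟩ ⟨hl, hAy, hBy, hCy, hDy⟩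
  rw [div_lt_iff₀ hBy] at hDy
  have hCD : |C y * D y ^ l| ≤ (|C x| + 1) * θ ^ l * B y ^ l := by
    rw [abs_mul, abs_pow, mul_assoc, ← mul_pow]
    gcongr
  have hBl : 0 < B y ^ l := pow_pos hBy l
  nlinarith [neg_abs_le (C y * D y ^ l)]

end Domination

/-- Let `F, G` be real power series convergent on `|t| < r`, with `G` having
nonnegative coefficients and `G(0) > 0`, `G'(0) > 0`.  If `I ⊆ [0, r)` is compact
and `F > 0` on `I`, then for all sufficiently large `l`,
`F(a) G(a)^l + F(-a) G(-a)^l > 0` on `I`. -/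
theorem stmt_13 (F G : ℕ → ℝ) (r : ℝ)
    (hFconv : ∀ t : ℝ, |t| < r → Summable fun n => F n * t ^ n)
    (hGconv : ∀ t : ℝ, |t| < r → Summable fun n => G n * t ^ n)
    (hGpos : ∀ n, 0 ≤ G n) (hG0 : 0 < G 0) (hG1 : 0 < G 1)
    (I : Set ℝ) (hIcompact : IsCompact I) (hIsub : I ⊆ Set.Ico 0 r)
    (hFposI : ∀ a ∈ I, 0 < ∑' n, F n * a ^ n) :
    ∃ L : ℕ, ∀ l : ℕ, L ≤ l → ∀ a ∈ I,
      0 < (∑' n, F n * a ^ n) * (∑' n, G n * a ^ n) ^ l +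
        (∑' n, F n * (-a) ^ n) * (∑' n, G n * (-a) ^ n) ^ l := by
  refine eventually_atTop.1 (hIcompact.eventually_forall_of_forall_eventually_prod_nhds ?_)
  intro a ha
  obtain ⟨ha0, har⟩ := hIsub ha
  have hra : |a| < r := by rwa [abs_of_nonneg ha0]
  have hrna : |-a| < r := by rwa [abs_neg]
  have hf := continuousAt_tsum_mul_pow hFconv hra
  have hg := continuousAt_tsum_mul_pow hGconv hra
  have hfn := (continuousAt_tsum_mul_pow hFconv hrna).comp continuousAt_neg
  have hgn := (continuousAt_tsum_mul_pow hGconv hrna).comp continuousAt_neg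
  have hga := tsum_mul_pow_pos_of_nonneg hGpos (hGconv a hra) hG0 ha0
  rcases ha0.eq_or_lt with rfl | hapos
  · exact eventually_pos_mul_pow_add_mul_pow_of_pos hf hg hfn hgn (hFposI 0 ha) hga
      (by simpa using hFposI 0 ha) (by simpa using hga)
  · exact eventually_pos_mul_pow_add_mul_pow_of_abs_lt hf hg hfn hgn (hFposI a ha) hga
      (abs_tsum_mul_neg_pow_lt hGpos (hGconv a hra) (hGconv (-a) hrna) hG0 hG1 hapos)
end

section
/- Let F(t), G(t) be real power series convergent on |t| < r with G having nonnegative coefficients and G(0), G'(0) > 0. Let I be a compact subset of [0, r) on which F is positive. Then for all sufficiently large l, the function a \mapsto (F(a) G(a)^l - F(-a) G(-a)^l)/a (extended by continuity at a = 0) is positive on I. -/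
open Filter Topology

lemma aux_abs_summable (F : ℕ → ℝ) {u v : ℝ} (hu : 0 ≤ u) (huv : u < v)
    (h : Summable fun n => F n * v ^ n) : Summable fun n => |F n| * u ^ n := by
  have hv : 0 < v := lt_of_le_of_lt hu huv
  have h0 : Tendsto (fun n => |F n * v ^ n|) atTop (𝓝 0) := by
    simpa using h.tendsto_atTop_zero.abs
  obtain ⟨C, hC⟩ := h0.bddAbove_range
  have hC' : ∀ n, |F n * v ^ n| ≤ C := fun n => hC ⟨n, rfl⟩
  have hgeo : Summable fun n => C * (u / v) ^ n :=
    (summable_geometric_of_lt_one (by positivity) (by rw [div_lt_one hv]; exact huv)).mul_left C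
  refine Summable.of_nonneg_of_le (fun n => by positivity) (fun n => ?_) hgeo
  have key : |F n| * u ^ n = |F n * v ^ n| * (u / v) ^ n := by
    rw [abs_mul, abs_pow, abs_of_pos hv, div_pow]
    field_simp
  rw [key]
  exact mul_le_mul_of_nonneg_right (hC' n) (by positivity)

set_option maxHeartbeats 2000000 in
/-- Let `F, G` be real power series convergent on `|t| < r`, with `G` having
nonnegative coefficients and `G(0) > 0`, `G'(0) > 0`.  If `I ⊆ [0, r)` is compact
and `F > 0` on `I`, then for all sufficiently large `l`, the function
`a ↦ (F(a) G(a)^l − F(-a) G(-a)^l)/a`, extended by continuity at `a = 0` by the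
value `F'(0) G(0)^l + l F(0) G(0)^{l-1} G'(0)`, is positive on `I`. -/
theorem stmt_14 (F G : ℕ → ℝ) (r : ℝ)
    (hFconv : ∀ t : ℝ, |t| < r → Summable fun n => F n * t ^ n)
    (hGconv : ∀ t : ℝ, |t| < r → Summable fun n => G n * t ^ n)
    (hGpos : ∀ n, 0 ≤ G n) (hG0 : 0 < G 0) (hG1 : 0 < G 1)
    (I : Set ℝ) (hIcompact : IsCompact I) (hIsub : I ⊆ Set.Ico 0 r)
    (hFposI : ∀ a ∈ I, 0 < ∑' n, F n * a ^ n) :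
    ∃ L : ℕ, ∀ l : ℕ, L ≤ l →
      (0 ∈ I → 0 < F 1 * (G 0) ^ l + (l : ℝ) * F 0 * (G 0) ^ (l - 1) * G 1) ∧
      ∀ a ∈ I, a ≠ 0 →
        0 < ((∑' n, F n * a ^ n) * (∑' n, G n * a ^ n) ^ l -
          (∑' n, F n * (-a) ^ n) * (∑' n, G n * (-a) ^ n) ^ l) / a := by
  rcases I.eq_empty_or_nonempty with hI | hI
  · subst hI
    exact ⟨0, fun l _ => ⟨fun h0 => absurd h0 (by simp), fun a ha => absurd ha (by simp)⟩⟩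
  -- maximum point of I
  obtain ⟨s, hsI, hs_max'⟩ := hIcompact.exists_isMaxOn hI continuousOn_id
  have hs_max : ∀ a ∈ I, a ≤ s := fun a ha => hs_max' ha
  have hs0 : 0 ≤ s := (hIsub hsI).1
  have hsr : s < r := (hIsub hsI).2
  set σ : ℝ := (s + r) / 2 with hσdef
  have hsσ : s < σ := by simp only [hσdef]; linarith
  have hσr : σ < r := by simp only [hσdef]; linarith
  have hσ0 : 0 < σ := lt_of_le_of_lt hs0 hsσ
  -- absolute summability
  have hFabsσ : Summable fun n => |F n| * σ ^ n := by
    refine aux_abs_summable F hσ0.le (show σ < (σ + r)/2 by linarith) (hFconv _ ?_)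
    rw [abs_of_pos (by linarith)]; linarith
  have hGσ : Summable fun n => G n * σ ^ n := hGconv σ (by rw [abs_of_pos hσ0]; exact hσr)
  have hFtail : Summable fun n => |F (n + 1)| * σ ^ n := by
    have h1 : Summable fun n => |F (n + 1)| * σ ^ (n + 1) :=
      (summable_nat_add_iff 1).2 hFabsσ
    have h2 := h1.mul_right σ⁻¹
    refine h2.congr fun n => ?_
    rw [pow_succ]
    field_simp
  set K : ℝ := 2 * ∑' n, |F (n + 1)| * σ ^ n with hKdef
  have hK0 : 0 ≤ K := by
    have : 0 ≤ ∑' n, |F (n + 1)| * σ ^ n := tsum_nonneg fun n => by positivity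
    simp only [hKdef]; linarith
  set Gmax : ℝ := ∑' n, G n * σ ^ n with hGmaxdef
  have hGmax_pos : 0 < Gmax := by
    have h := Summable.le_tsum hGσ 0 (fun j _ => mul_nonneg (hGpos j) (by positivity))
    simp only [pow_zero, mul_one] at h
    exact lt_of_lt_of_le hG0 h
  -- continuity and minimum of f on I
  have hcont : ContinuousOn (fun a : ℝ => ∑' n, F n * a ^ n) I := by
    have hc : ContinuousOn (fun a : ℝ => ∑' n, F n * a ^ n) (Set.Icc (-σ) σ) := by
      refine continuousOn_tsum (fun i => (Continuous.continuousOn (by continuity))) hFabsσ ?_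
      intro n x hx
      rw [Real.norm_eq_abs, abs_mul, abs_pow]
      refine mul_le_mul_of_nonneg_left (pow_le_pow_left₀ (abs_nonneg x) ?_ n) (abs_nonneg _)
      rw [abs_le]; exact ⟨hx.1, hx.2⟩
    exact hc.mono fun a ha => ⟨by linarith [(hIsub ha).1], by linarith [hs_max a ha]⟩
  obtain ⟨a₀, ha₀I, hmin'⟩ := hIcompact.exists_isMinOn hI hcont
  have hmin : ∀ a ∈ I, (∑' n, F n * a₀ ^ n) ≤ ∑' n, F n * a ^ n := fun a ha => hmin' ha
  set m : ℝ := ∑' n, F n * a₀ ^ n with hmdef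
  have hm0 : 0 < m := hFposI a₀ ha₀I
  set c' : ℝ := min (2 * G 0 / (s + 1)) (2 * G 1) with hc'def
  have hc'0 : 0 < c' := lt_min (by positivity) (by positivity)
  refine ⟨⌈K * Gmax / (m * c')⌉₊ + ⌈|F 1| * G 0 / (F 0 * G 1)⌉₊ + 1, fun l hl => ⟨?_, ?_⟩⟩
  · -- the a = 0 clause
    intro h0I
    have hF0 : 0 < F 0 := by
      have h := hFposI 0 h0I
      rwa [tsum_eq_single 0 (fun n hn => by simp [zero_pow hn]), pow_zero, mul_one] at h
    have hl1 : 1 ≤ l := by omega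
    have hlb : |F 1| * G 0 / (F 0 * G 1) < (l : ℝ) := by
      refine lt_of_le_of_lt (Nat.le_ceil _) ?_
      exact_mod_cast Nat.lt_of_lt_of_le (by omega) hl
    have h2 : |F 1| * G 0 < (l : ℝ) * (F 0 * G 1) := by
      rwa [div_lt_iff₀ (by positivity)] at hlb
    have hpow : G 0 ^ l = G 0 ^ (l - 1) * G 0 := by
      rw [← pow_succ]; congr 1; omega
    have hpos : 0 < G 0 ^ (l - 1) := pow_pos hG0 _
    have habs : -|F 1| ≤ F 1 := neg_abs_le _
    rw [hpow]
    have h3 : |F 1| * G 0 * G 0 ^ (l - 1) < (l : ℝ) * (F 0 * G 1) * G 0 ^ (l - 1) :=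
      mul_lt_mul_of_pos_right h2 hpos
    have h4 : -|F 1| * G 0 * G 0 ^ (l - 1) ≤ F 1 * G 0 * G 0 ^ (l - 1) :=
      mul_le_mul_of_nonneg_right (mul_le_mul_of_nonneg_right habs hG0.le) hpos.le
    nlinarith [h3, h4]
  · -- the a ≠ 0 clause
    intro a haI ha0
    have ha0' : 0 < a := lt_of_le_of_ne (hIsub haI).1 (Ne.symm ha0)
    have has : a ≤ s := hs_max a haI
    have haσ : a < σ := lt_of_le_of_lt has hsσ
    have har : a < r := lt_trans haσ hσr
    have hFa : Summable fun n => F n * a ^ n := hFconv a (by rw [abs_of_pos ha0']; exact har)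
    have hFna : Summable fun n => F n * (-a) ^ n :=
      hFconv (-a) (by rw [abs_neg, abs_of_pos ha0']; exact har)
    have hGa : Summable fun n => G n * a ^ n := hGconv a (by rw [abs_of_pos ha0']; exact har)
    have hGna : Summable fun n => G n * (-a) ^ n :=
      hGconv (-a) (by rw [abs_neg, abs_of_pos ha0']; exact har)
    set fa : ℝ := ∑' n, F n * a ^ n with hfadef
    set fna : ℝ := ∑' n, F n * (-a) ^ n with hfnadef
    set ga : ℝ := ∑' n, G n * a ^ n with hgadef
    set gna : ℝ := ∑' n, G n * (-a) ^ n with hgnadef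
    have hfa_m : m ≤ fa := hmin a haI
    have hfa_pos : 0 < fa := lt_of_lt_of_le hm0 hfa_m
    -- bound |fa - fna| ≤ K * a
    have hdiff : |fa - fna| ≤ K * a := by
      have hsub : fa - fna = ∑' n, (F n * a ^ n - F n * (-a) ^ n) := (Summable.tsum_sub hFa hFna).symm
      have hterm_bd : ∀ n : ℕ, |F (n+1) * a ^ (n+1) - F (n+1) * (-a) ^ (n+1)|
          ≤ 2 * a * (|F (n+1)| * σ ^ n) := by
        intro n
        have h1 : |F (n+1) * a ^ (n+1) - F (n+1) * (-a) ^ (n+1)| ≤ 2 * (|F (n+1)| * a ^ (n+1)) := by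
          have := abs_sub (F (n+1) * a ^ (n+1)) (F (n+1) * (-a) ^ (n+1))
          rw [abs_mul, abs_mul, abs_pow, abs_pow, abs_neg, abs_of_pos ha0'] at this
          linarith
        have h2 : |F (n+1)| * a ^ (n+1) ≤ a * (|F (n+1)| * σ ^ n) := by
          have hss : a ^ n ≤ σ ^ n := pow_le_pow_left₀ ha0'.le haσ.le n
          have hmul := mul_le_mul_of_nonneg_left hss
            (mul_nonneg (abs_nonneg (F (n+1))) ha0'.le)
          calc |F (n+1)| * a ^ (n+1) = |F (n+1)| * a * a ^ n := by ring
            _ ≤ |F (n+1)| * a * σ ^ n := hmul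
            _ = a * (|F (n+1)| * σ ^ n) := by ring
        linarith
      have hs_abs : Summable fun n => |F n * a ^ n - F n * (-a) ^ n| := by
        refine Summable.of_nonneg_of_le (fun n => abs_nonneg _) (fun n => ?_)
          ((hFabsσ.mul_left 2))
        have h1 := abs_sub (F n * a ^ n) (F n * (-a) ^ n)
        rw [abs_mul, abs_mul, abs_pow, abs_pow, abs_neg, abs_of_pos ha0'] at h1
        have h2 : a ^ n ≤ σ ^ n := pow_le_pow_left₀ ha0'.le haσ.le n
        nlinarith [abs_nonneg (F n)]
      have habs : |fa - fna| ≤ ∑' n, |F n * a ^ n - F n * (-a) ^ n| := by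
        rw [hsub]
        have := norm_tsum_le_tsum_norm (f := fun n => F n * a ^ n - F n * (-a) ^ n)
          (by simpa using hs_abs)
        simpa using this
      have hshift : ∑' n, |F n * a ^ n - F n * (-a) ^ n|
          = ∑' n, |F (n+1) * a ^ (n+1) - F (n+1) * (-a) ^ (n+1)| := by
        rw [Summable.tsum_eq_zero_add hs_abs]
        simp
      have htail_sum : Summable fun n => 2 * a * (|F (n+1)| * σ ^ n) := hFtail.mul_left _
      have hle : ∑' n, |F (n+1) * a ^ (n+1) - F (n+1) * (-a) ^ (n+1)|
          ≤ ∑' n, 2 * a * (|F (n+1)| * σ ^ n) := by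
        refine Summable.tsum_le_tsum hterm_bd ?_ htail_sum
        exact Summable.of_nonneg_of_le (fun n => abs_nonneg _) hterm_bd htail_sum
      have heq : ∑' n, 2 * a * (|F (n+1)| * σ ^ n) = K * a := by
        rw [tsum_mul_left, hKdef]; ring
      calc |fa - fna| ≤ ∑' n, |F n * a ^ n - F n * (-a) ^ n| := habs
        _ = ∑' n, |F (n+1) * a ^ (n+1) - F (n+1) * (-a) ^ (n+1)| := hshift
        _ ≤ ∑' n, 2 * a * (|F (n+1)| * σ ^ n) := hle
        _ = K * a := heq
    have hfna_bd : |fna| ≤ fa + K * a := by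
      have : |fna| ≤ |fa| + |fa - fna| := by
        have := abs_sub_abs_le_abs_sub fna fa
        rw [abs_sub_comm] at this
        linarith [abs_nonneg fna, le_abs_self fa]
      rw [abs_of_pos hfa_pos] at this
      linarith
    -- bounds for g
    have hga_pos : 0 < ga := by
      have h := Summable.le_tsum hGa 0 (fun j _ => mul_nonneg (hGpos j) (by positivity))
      simp only [pow_zero, mul_one] at h
      exact lt_of_lt_of_le hG0 h
    have hga_le : ga ≤ Gmax := by
      refine Summable.tsum_le_tsum (fun n => ?_) hGa hGσ
      exact mul_le_mul_of_nonneg_left (pow_le_pow_left₀ ha0'.le haσ.le n) (hGpos n)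
    have hc'a1 : c' * a ≤ 2 * G 1 * a :=
      mul_le_mul_of_nonneg_right (min_le_right _ _) ha0'.le
    have hc'a0 : c' * a ≤ 2 * G 0 := by
      have h1 : c' * a ≤ 2 * G 0 / (s + 1) * a :=
        mul_le_mul_of_nonneg_right (min_le_left _ _) ha0'.le
      have h2 : 2 * G 0 / (s + 1) * a ≤ 2 * G 0 := by
        rw [div_mul_eq_mul_div, div_le_iff₀ (by linarith)]
        nlinarith
      linarith
    have hpow_le : ∀ j : ℕ, (-a) ^ j ≤ a ^ j := fun j => by
      calc (-a) ^ j ≤ |(-a) ^ j| := le_abs_self _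
        _ = a ^ j := by rw [abs_pow, abs_neg, abs_of_pos ha0']
    have hpow_ge : ∀ j : ℕ, -(a ^ j) ≤ (-a) ^ j := fun j => by
      have h1 : -|(-a) ^ j| ≤ (-a) ^ j := neg_abs_le _
      rwa [abs_pow, abs_neg, abs_of_pos ha0'] at h1
    have hup : gna ≤ ga - 2 * G 1 * a := by
      have hsum : Summable fun n => G n * a ^ n - G n * (-a) ^ n := hGa.sub hGna
      have h := Summable.le_tsum hsum 1 (fun j _ => by nlinarith [hGpos j, hpow_le j])
      have he : ∑' n, (G n * a ^ n - G n * (-a) ^ n) = ga - gna := Summable.tsum_sub hGa hGna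
      rw [he] at h
      simp only [pow_one] at h
      linarith
    have hlow : -gna ≤ ga - 2 * G 0 := by
      have hsum : Summable fun n => G n * a ^ n + G n * (-a) ^ n := hGa.add hGna
      have h := Summable.le_tsum hsum 0 (fun j _ => by
        nlinarith [hGpos j, hpow_ge j, pow_nonneg ha0'.le j])
      have he : ∑' n, (G n * a ^ n + G n * (-a) ^ n) = ga + gna := Summable.tsum_add hGa hGna
      rw [he] at h
      simp only [pow_zero, mul_one] at h
      linarith
    have hgna_abs : |gna| ≤ ga - c' * a :=
      abs_le.2 ⟨by linarith, by linarith⟩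
    have hc'a_ga : c' * a ≤ ga := by
      have := abs_nonneg gna; linarith
    -- the key quantity x
    set x : ℝ := c' * a / Gmax with hxdef
    have hx0 : 0 < x := by positivity
    have hx1 : x ≤ 1 := by
      rw [hxdef, div_le_one hGmax_pos]; linarith
    have hGx : Gmax * x = c' * a := by
      rw [hxdef, mul_div_cancel₀ _ (ne_of_gt hGmax_pos)]
    -- key inequality (1-x)^l (1+lx) ≤ 1
    have key1 : (1 - x) ^ l * (1 + (l : ℝ) * x) ≤ 1 := by
      have hb : (1 : ℝ) + (l : ℝ) * x ≤ (1 + x) ^ l := one_add_mul_le_pow (by linarith) l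
      have h1x : (0:ℝ) ≤ 1 - x := by linarith
      calc (1 - x) ^ l * (1 + (l : ℝ) * x) ≤ (1 - x) ^ l * (1 + x) ^ l :=
            mul_le_mul_of_nonneg_left hb (pow_nonneg h1x l)
        _ = ((1 - x) * (1 + x)) ^ l := (mul_pow _ _ _).symm
        _ = (1 - x ^ 2) ^ l := by ring_nf
        _ ≤ 1 := pow_le_one₀ (by nlinarith) (by nlinarith)
    -- chain of bounds
    have key2 : fna * gna ^ l ≤ (fa + K * a) * (ga - c' * a) ^ l := by
      calc fna * gna ^ l ≤ |fna * gna ^ l| := le_abs_self _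
        _ = |fna| * |gna| ^ l := by rw [abs_mul, abs_pow]
        _ ≤ (fa + K * a) * (ga - c' * a) ^ l := by
            refine mul_le_mul hfna_bd (pow_le_pow_left₀ (abs_nonneg _) hgna_abs l)
              (pow_nonneg (abs_nonneg _) l) ?_
            nlinarith [mul_nonneg hK0 ha0'.le]
    have hgac_nonneg : 0 ≤ ga - c' * a := by linarith [abs_nonneg gna]
    have key3 : (ga - c' * a) ^ l ≤ ga ^ l * (1 - x) ^ l := by
      have hmid : ga - c' * a ≤ ga * (1 - x) := by
        have h1 : ga * x ≤ Gmax * x := mul_le_mul_of_nonneg_right hga_le hx0.le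
        nlinarith [hGx]
      calc (ga - c' * a) ^ l ≤ (ga * (1 - x)) ^ l := pow_le_pow_left₀ hgac_nonneg hmid l
        _ = ga ^ l * (1 - x) ^ l := mul_pow _ _ _
    -- from the choice of L
    have hKl : K * Gmax < (l : ℝ) * (m * c') := by
      have h1 : K * Gmax / (m * c') < (l : ℝ) := by
        refine lt_of_le_of_lt (Nat.le_ceil _) ?_
        exact_mod_cast Nat.lt_of_lt_of_le (by omega) hl
      rwa [div_lt_iff₀ (mul_pos hm0 hc'0)] at h1
    have hgal : 0 < ga ^ l := pow_pos hga_pos l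
    have h1lx : (0:ℝ) < 1 + (l : ℝ) * x := by positivity
    have hB : (fa + K * a) * ga ^ l < fa * ga ^ l * (1 + (l : ℝ) * x) := by
      have hKax : K * a < fa * ((l : ℝ) * x) := by
        have h1 : K * Gmax * a < (l : ℝ) * (m * c') * a :=
          mul_lt_mul_of_pos_right hKl ha0'
        have h2 : (l : ℝ) * (m * c') * a = m * (l : ℝ) * (Gmax * x) := by
          rw [hGx]; ring
        have h3 : m * (l : ℝ) * (Gmax * x) ≤ fa * (l : ℝ) * (Gmax * x) := by
          have hnn2 : (0:ℝ) ≤ (l : ℝ) * (Gmax * x) := by positivity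
          nlinarith
        have h4 : K * Gmax * a < fa * (l : ℝ) * (Gmax * x) := by linarith
        nlinarith [hGmax_pos]
      nlinarith [mul_lt_mul_of_pos_right hKax hgal]
    have hA : (fa + K * a) * ga ^ l * (1 - x) ^ l * (1 + (l : ℝ) * x)
        ≤ (fa + K * a) * ga ^ l := by
      have hKa : (0:ℝ) ≤ K * a := mul_nonneg hK0 ha0'.le
      have hnn : (0:ℝ) ≤ (fa + K * a) * ga ^ l :=
        mul_nonneg (by linarith) hgal.le
      calc (fa + K * a) * ga ^ l * (1 - x) ^ l * (1 + (l : ℝ) * x)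
          = (fa + K * a) * ga ^ l * ((1 - x) ^ l * (1 + (l : ℝ) * x)) := by ring
        _ ≤ (fa + K * a) * ga ^ l * 1 := mul_le_mul_of_nonneg_left key1 hnn
        _ = (fa + K * a) * ga ^ l := by ring
    have hD : (fa + K * a) * ga ^ l * (1 - x) ^ l < fa * ga ^ l := by
      have hC : (fa + K * a) * ga ^ l * (1 - x) ^ l * (1 + (l : ℝ) * x)
          < fa * ga ^ l * (1 + (l : ℝ) * x) := lt_of_le_of_lt hA hB
      exact lt_of_mul_lt_mul_right hC h1lx.le
    have hmain : fna * gna ^ l < fa * ga ^ l := by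
      have hKa : (0:ℝ) ≤ K * a := mul_nonneg hK0 ha0'.le
      have h1 : (fa + K * a) * (ga - c' * a) ^ l ≤ (fa + K * a) * (ga ^ l * (1 - x) ^ l) :=
        mul_le_mul_of_nonneg_left key3 (by linarith)
      nlinarith [key2]
    rw [hfadef, hfnadef, hgadef, hgnadef] at hmain
    exact div_pos (by linarith [hmain]) ha0'
end

section
/- The probabilists' Hermite polynomials satisfy the Mehler-type generating function: for |t| < 1 and real x, y, \sum_{k \ge 0} h_k(x) h_k(y) t^k / k! = (1-t^2)^{-1/2} \exp\bigl( -\frac{t^2 x^2/2 - t x y + t^2 y^2/2}{1 - t^2} \bigr), with the series convergent for |t| < 1. -/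
open MeasureTheory Complex Real

/-- integrability of `(A + u²)^k e^{-b u²}` -/
lemma mehler_aux_int (A : ℝ) {b : ℝ} (hb : 0 < b) (k : ℕ) :
    Integrable (fun u : ℝ => (A + u ^ 2) ^ k * Real.exp (-b * u ^ 2)) := by
  have h1 : ∀ m : ℕ, Integrable (fun u : ℝ => u ^ m * Real.exp (-b * u ^ 2)) := by
    intro m
    have := integrable_rpow_mul_exp_neg_mul_sq hb (s := (m : ℝ))
      ((by norm_num : (-1:ℝ) < 0).trans_le (Nat.cast_nonneg m))
    simpa [Real.rpow_natCast] using this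
  have h2 : (fun u : ℝ => (A + u ^ 2) ^ k * Real.exp (-b * u ^ 2))
      = fun u => ∑ m ∈ Finset.range (k + 1),
        (A ^ m * (k.choose m : ℝ)) * (u ^ (2 * (k - m)) * Real.exp (-b * u ^ 2)) := by
    funext u
    rw [add_pow, Finset.sum_mul]
    refine Finset.sum_congr rfl fun m _ => ?_
    rw [pow_mul]
    ring
  rw [h2]
  exact integrable_finset_sum _ fun m _ => (h1 _).const_mul _

lemma mehler_norm_bound (x u : ℝ) : ‖(x : ℂ) + u * Complex.I‖ ≤ (1 + x ^ 2) + u ^ 2 := by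
  rw [Complex.norm_add_mul_I]
  nlinarith [Real.sq_sqrt (show (0:ℝ) ≤ x ^ 2 + u ^ 2 by positivity),
    Real.sqrt_nonneg (x ^ 2 + u ^ 2)]

lemma mehler_norm_bound' (x u : ℝ) : ‖(x : ℂ) + u * Complex.I‖ ≤ |x| + |u| := by
  calc ‖(x : ℂ) + u * Complex.I‖ ≤ ‖(x:ℂ)‖ + ‖(u:ℂ) * Complex.I‖ := norm_add_le _ _
  _ ≤ |x| + |u| := by simp

lemma mehler_sq_norm (x u : ℝ) : ‖(x : ℂ) + u * Complex.I‖ ^ 2 = x ^ 2 + u ^ 2 := by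
  rw [Complex.norm_add_mul_I, Real.sq_sqrt (by positivity)]

/-- integrability of the basic complex integrand -/
lemma mehler_int_phi (x : ℝ) (k : ℕ) :
    Integrable (fun u : ℝ => ((x : ℂ) + u * Complex.I) ^ k * (Real.exp (-u ^ 2 / 2) : ℂ)) := by
  refine ((mehler_aux_int (1 + x ^ 2) (by norm_num : (0:ℝ) < 1/2) k).mono' ?_ ?_)
  · apply Continuous.aestronglyMeasurable
    fun_prop
  · refine Filter.Eventually.of_forall fun u => ?_
    rw [norm_mul]
    have h1 : ‖((x : ℂ) + u * Complex.I) ^ k‖ ≤ ((1 + x ^ 2) + u ^ 2) ^ k := by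
      rw [norm_pow]
      exact pow_le_pow_left₀ (norm_nonneg _) (mehler_norm_bound x u) k
    have h2 : ‖(Real.exp (-u ^ 2 / 2) : ℂ)‖ = Real.exp (-(1/2) * u ^ 2) := by
      rw [Complex.norm_real, Real.norm_of_nonneg (Real.exp_pos _).le]
      ring_nf
    rw [h2]
    exact mul_le_mul_of_nonneg_right h1 (Real.exp_pos _).le

lemma mehler_int_exp_abs (a : ℝ) : Integrable (fun u : ℝ => Real.exp (a * |u| - u ^ 2 / 2)) := by
  refine ((integrable_exp_neg_mul_sq (by norm_num : (0:ℝ) < 1/4)).const_mul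
    (Real.exp (a ^ 2))).mono' ?_ ?_
  · exact (((continuous_const.mul _root_.continuous_abs).sub
      ((continuous_pow 2).div_const 2)).rexp).aestronglyMeasurable
  · refine Filter.Eventually.of_forall fun u => ?_
    rw [Real.norm_of_nonneg (Real.exp_pos _).le, ← Real.exp_add]
    apply Real.exp_le_exp.mpr
    nlinarith [sq_nonneg (|a| - |u|/2), le_abs_self a, abs_nonneg u, abs_nonneg a,
      neg_abs_le a, _root_.sq_abs u, _root_.sq_abs a]

lemma mehler_norm_F (x t : ℝ) (k : ℕ) (u : ℝ) :
    ‖((x:ℂ) + u * Complex.I) ^ k * (Real.exp (-u ^ 2 / 2) : ℂ) * ((t:ℂ) ^ k / (k.factorial : ℂ))‖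
      = ‖(x:ℂ) + u * Complex.I‖ ^ k * Real.exp (-u ^ 2 / 2) * (|t| ^ k / (k.factorial : ℝ)) := by
  rw [norm_mul, norm_mul, norm_pow, norm_div, norm_pow]
  simp only [Complex.norm_real, Real.norm_eq_abs, Complex.norm_natCast,
    _root_.abs_of_nonneg (Real.exp_pos _).le]

lemma mehler_summable_1d (x t : ℝ) :
    Summable (fun k : ℕ => ∫ u : ℝ,
      ‖((x:ℂ) + u * Complex.I) ^ k * (Real.exp (-u ^ 2 / 2) : ℂ)
        * ((t:ℂ) ^ k / (k.factorial : ℂ))‖) := by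
  have hFint : ∀ k : ℕ, Integrable (fun u : ℝ =>
      ‖((x:ℂ) + u * Complex.I) ^ k * (Real.exp (-u ^ 2 / 2) : ℂ)
        * ((t:ℂ) ^ k / (k.factorial : ℂ))‖) :=
    fun k => ((mehler_int_phi x k).mul_const _).norm
  have hGint : Integrable (fun u : ℝ =>
      Real.exp (|t| * |x|) * Real.exp (|t| * |u| - u ^ 2 / 2)) :=
    (mehler_int_exp_abs |t|).const_mul _
  refine summable_of_sum_range_le
    (c := ∫ u : ℝ, Real.exp (|t| * |x|) * Real.exp (|t| * |u| - u ^ 2 / 2))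
    (fun k => integral_nonneg fun u => norm_nonneg _) (fun n => ?_)
  rw [← integral_finset_sum _ fun k _ => hFint k]
  refine integral_mono (integrable_finset_sum _ fun k _ => hFint k) hGint fun u => ?_
  have hb : ∀ k : ℕ, ‖((x:ℂ) + u * Complex.I) ^ k * (Real.exp (-u ^ 2 / 2) : ℂ)
      * ((t:ℂ) ^ k / (k.factorial : ℂ))‖
      ≤ (|t| * (|x| + |u|)) ^ k / (k.factorial : ℝ) * Real.exp (-u ^ 2 / 2) := by
    intro k
    rw [mehler_norm_F]
    have h1 : ‖(x:ℂ) + u * Complex.I‖ ^ k ≤ (|x| + |u|) ^ k :=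
      pow_le_pow_left₀ (norm_nonneg _) (mehler_norm_bound' x u) k
    calc ‖(x:ℂ) + u * Complex.I‖ ^ k * Real.exp (-u ^ 2 / 2) * (|t| ^ k / (k.factorial : ℝ))
        ≤ (|x| + |u|) ^ k * Real.exp (-u ^ 2 / 2) * (|t| ^ k / (k.factorial : ℝ)) := by
          have := Real.exp_pos (-u ^ 2 / 2)
          apply mul_le_mul_of_nonneg_right (mul_le_mul_of_nonneg_right h1 this.le)
          positivity
      _ = (|t| * (|x| + |u|)) ^ k / (k.factorial : ℝ) * Real.exp (-u ^ 2 / 2) := by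
          rw [mul_pow]; ring
  calc (∑ k ∈ Finset.range n, ‖((x:ℂ) + u * Complex.I) ^ k * (Real.exp (-u ^ 2 / 2) : ℂ)
        * ((t:ℂ) ^ k / (k.factorial : ℂ))‖)
      ≤ ∑ k ∈ Finset.range n,
          (|t| * (|x| + |u|)) ^ k / (k.factorial : ℝ) * Real.exp (-u ^ 2 / 2) :=
        Finset.sum_le_sum fun k _ => hb k
    _ = (∑ k ∈ Finset.range n, (|t| * (|x| + |u|)) ^ k / (k.factorial : ℝ))
          * Real.exp (-u ^ 2 / 2) := (Finset.sum_mul _ _ _).symm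
    _ ≤ Real.exp (|t| * (|x| + |u|)) * Real.exp (-u ^ 2 / 2) :=
        mul_le_mul_of_nonneg_right
          (Real.sum_le_exp_of_nonneg (by positivity) n) (Real.exp_pos _).le
    _ = Real.exp (|t| * |x|) * Real.exp (|t| * |u| - u ^ 2 / 2) := by
        rw [← Real.exp_add, ← Real.exp_add]; ring_nf

lemma mehler_hasSum_1d (x t : ℝ) :
    HasSum (fun k : ℕ => (∫ u : ℝ, ((x:ℂ) + u * Complex.I) ^ k * (Real.exp (-u ^ 2 / 2) : ℂ))
        * ((t:ℂ) ^ k / (k.factorial : ℂ)))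
      ((Real.sqrt (2 * π) : ℂ) * Complex.exp ((t:ℂ) * (x:ℂ) - (t:ℂ) ^ 2 / 2)) := by
  have key := hasSum_integral_of_summable_integral_norm (μ := (volume : Measure ℝ))
    (F := fun (k : ℕ) (u : ℝ) => ((x:ℂ) + u * Complex.I) ^ k * (Real.exp (-u ^ 2 / 2) : ℂ)
      * ((t:ℂ) ^ k / (k.factorial : ℂ)))
    (fun k => (mehler_int_phi x k).mul_const _) (mehler_summable_1d x t)
  have h1 : ∀ k : ℕ, (∫ u : ℝ, ((x:ℂ) + u * Complex.I) ^ k * (Real.exp (-u ^ 2 / 2) : ℂ)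
      * ((t:ℂ) ^ k / (k.factorial : ℂ)))
      = (∫ u : ℝ, ((x:ℂ) + u * Complex.I) ^ k * (Real.exp (-u ^ 2 / 2) : ℂ))
        * ((t:ℂ) ^ k / (k.factorial : ℂ)) := fun k => integral_mul_const _ _
  have ht : ∀ u : ℝ, (∑' k : ℕ, ((x:ℂ) + u * Complex.I) ^ k * (Real.exp (-u ^ 2 / 2) : ℂ)
      * ((t:ℂ) ^ k / (k.factorial : ℂ)))
      = Complex.exp ((t:ℂ) * ((x:ℂ) + u * Complex.I)) * (Real.exp (-u ^ 2 / 2) : ℂ) := by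
    intro u
    have hz := NormedSpace.expSeries_div_hasSum_exp ((t:ℂ) * ((x:ℂ) + u * Complex.I))
    rw [← Complex.exp_eq_exp_ℂ] at hz
    have hz2 := hz.mul_right ((Real.exp (-u ^ 2 / 2) : ℝ) : ℂ)
    have hfe : (fun k : ℕ => ((t:ℂ) * ((x:ℂ) + u * Complex.I)) ^ k / (k.factorial : ℂ)
        * ((Real.exp (-u ^ 2 / 2) : ℝ) : ℂ))
        = fun k : ℕ => ((x:ℂ) + u * Complex.I) ^ k * (Real.exp (-u ^ 2 / 2) : ℂ)
          * ((t:ℂ) ^ k / (k.factorial : ℂ)) := by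
      funext k; rw [mul_pow]; ring
    rw [hfe] at hz2
    exact hz2.tsum_eq
  have hquad : (∫ u : ℝ, Complex.exp ((t:ℂ) * ((x:ℂ) + u * Complex.I))
      * (Real.exp (-u ^ 2 / 2) : ℂ))
      = (Real.sqrt (2 * π) : ℂ) * Complex.exp ((t:ℂ) * (x:ℂ) - (t:ℂ) ^ 2 / 2) := by
    have hfun : ∀ u : ℝ, Complex.exp ((t:ℂ) * ((x:ℂ) + u * Complex.I))
        * (Real.exp (-u ^ 2 / 2) : ℂ)
        = Complex.exp ((-(1/2) : ℂ) * (u:ℂ) ^ 2 + ((t:ℂ) * Complex.I) * (u:ℂ)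
            + (t:ℂ) * (x:ℂ)) := by
      intro u
      rw [Complex.ofReal_exp, ← Complex.exp_add]
      congr 1
      push_cast
      ring
    simp_rw [hfun]
    rw [integral_cexp_quadratic (by norm_num : (-(1/2) : ℂ).re < 0)]
    have e1 : ((π : ℂ) / -(-(1/2) : ℂ)) = ((2 * π : ℝ) : ℂ) := by push_cast; ring
    have e2 : ((2 * π : ℝ) : ℂ) ^ ((1:ℂ)/2) = ((Real.sqrt (2 * π) : ℝ) : ℂ) := by
      rw [Real.sqrt_eq_rpow, Complex.ofReal_cpow (by positivity : (0:ℝ) ≤ 2 * π)]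
      norm_num
    have e3 : (t:ℂ) * (x:ℂ) - ((t:ℂ) * Complex.I) ^ 2 / (4 * (-(1/2) : ℂ))
        = (t:ℂ) * (x:ℂ) - (t:ℂ) ^ 2 / 2 := by
      have : ((t:ℂ) * Complex.I) ^ 2 = -(t:ℂ) ^ 2 := by
        rw [mul_pow, Complex.I_sq]; ring
      rw [this]; ring
    rw [e1, e3, show (1/2 : ℂ) = (1:ℂ)/2 from rfl, e2]
  rw [funext h1, funext ht] at key
  rwa [hquad] at key

lemma mehler_rep (h : ℕ → Polynomial ℝ)
    (hgen : ∀ x t : ℝ, HasSum (fun k : ℕ => (h k).eval x * t ^ k / (k.factorial : ℝ))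
      (Real.exp (t * x - t ^ 2 / 2))) (x : ℝ) (k : ℕ) :
    (((h k).eval x : ℝ) : ℂ) = (((Real.sqrt (2 * π))⁻¹ : ℝ) : ℂ)
      * ∫ u : ℝ, ((x:ℂ) + u * Complex.I) ^ k * (Real.exp (-u ^ 2 / 2) : ℂ) := by
  set s : ℝ := Real.sqrt (2 * π) with hs_def
  have hs : 0 < s := Real.sqrt_pos.mpr (by positivity)
  set f : ℝ → ℂ := fun t => Complex.exp ((t:ℂ) * (x:ℂ) - (t:ℂ) ^ 2 / 2) with hf_def
  set p : FormalMultilinearSeries ℝ ℝ ℂ := fun n =>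
    ContinuousMultilinearMap.mkPiRing ℝ (Fin n) ((((h n).eval x / n.factorial : ℝ)) : ℂ)
    with hp_def
  set q : FormalMultilinearSeries ℝ ℝ ℂ := fun n =>
    ContinuousMultilinearMap.mkPiRing ℝ (Fin n)
      (((s⁻¹ : ℝ) : ℂ) * (∫ u : ℝ, ((x:ℂ) + u * Complex.I) ^ n * (Real.exp (-u ^ 2 / 2) : ℂ))
        / (n.factorial : ℂ)) with hq_def
  have hofr : ∀ t : ℝ, ((Real.exp (t * x - t ^ 2 / 2) : ℝ) : ℂ) = f t := by
    intro t
    simp only [hf_def, Complex.ofReal_exp]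
    congr 1
    push_cast
    ring
  have hp : HasFPowerSeriesOnBall f p 0 1 := by
    constructor
    · refine p.le_radius_of_summable_norm ?_
      have h1 := summable_abs_iff.mpr (hgen x 1).summable
      simp only [one_pow, mul_one] at h1
      apply Summable.of_nonneg_of_le (fun n => by positivity) ?_ h1
      intro n
      simp only [hp_def, ContinuousMultilinearMap.norm_mkPiRing, NNReal.coe_one, one_pow, mul_one,
        Complex.norm_real, Real.norm_eq_abs]
      exact le_of_eq (by norm_num)
    · exact one_pos
    · intro y hy
      have hy' := Complex.hasSum_ofReal.mpr (hgen x y)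
      rw [hofr y] at hy'
      have hfe : (fun n : ℕ => p n fun _ => y)
          = fun n : ℕ => (((h n).eval x * y ^ n / n.factorial : ℝ) : ℂ) := by
        funext n
        simp only [hp_def, ContinuousMultilinearMap.mkPiRing_apply, Finset.prod_const,
          Finset.card_univ, Fintype.card_fin, Complex.real_smul]
        push_cast
        ring
      rw [hfe, zero_add]
      exact hy'
  have hq : HasFPowerSeriesOnBall f q 0 1 := by
    constructor
    · refine q.le_radius_of_summable_norm ?_
      have h1 := (mehler_summable_1d x 1).mul_left s⁻¹
      apply Summable.of_nonneg_of_le (fun n => by positivity) ?_ h1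
      intro n
      simp only [hq_def, ContinuousMultilinearMap.norm_mkPiRing, NNReal.coe_one, one_pow, mul_one]
      have h2 : (∫ u : ℝ, ‖((x:ℂ) + u * Complex.I) ^ n * (Real.exp (-u ^ 2 / 2) : ℂ)
          * (((1:ℝ):ℂ) ^ n / (n.factorial : ℂ))‖)
          = (∫ u : ℝ, ‖((x:ℂ) + u * Complex.I) ^ n * (Real.exp (-u ^ 2 / 2) : ℂ)‖)
            / (n.factorial : ℝ) := by
        rw [← integral_div]
        congr 1
        funext u
        rw [norm_mul (((x:ℂ) + u * Complex.I) ^ n * _), norm_div]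
        simp [div_eq_mul_inv]
      rw [h2, norm_div, norm_mul, Complex.norm_real, Real.norm_eq_abs, _root_.abs_of_nonneg
        (inv_nonneg.mpr hs.le), Complex.norm_natCast, mul_div_assoc]
      have := norm_integral_le_integral_norm (μ := (volume : MeasureTheory.Measure ℝ))
        (fun u : ℝ => ((x:ℂ) + u * Complex.I) ^ n * (Real.exp (-u ^ 2 / 2) : ℂ))
      gcongr
    · exact one_pos
    · intro y hy
      have hh := (mehler_hasSum_1d x y).mul_left ((s⁻¹ : ℝ) : ℂ)
      have hcancel : ((s⁻¹ : ℝ) : ℂ) * ((s : ℝ) : ℂ)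
          * Complex.exp ((y:ℂ) * (x:ℂ) - (y:ℂ) ^ 2 / 2) = f y := by
        rw [hf_def]
        have : ((s⁻¹ : ℝ) : ℂ) * ((s : ℝ) : ℂ) = 1 := by
          rw [← Complex.ofReal_mul, inv_mul_cancel₀ hs.ne', Complex.ofReal_one]
        rw [this, one_mul]
      rw [← mul_assoc, hcancel] at hh
      have hfe : (fun n : ℕ => q n fun _ => y)
          = fun n : ℕ => ((s⁻¹ : ℝ) : ℂ)
            * ((∫ u : ℝ, ((x:ℂ) + u * Complex.I) ^ n * (Real.exp (-u ^ 2 / 2) : ℂ))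
              * ((y:ℂ) ^ n / (n.factorial : ℂ))) := by
        funext n
        simp only [hq_def, ContinuousMultilinearMap.mkPiRing_apply, Finset.prod_const,
          Finset.card_univ, Fintype.card_fin, Complex.real_smul]
        push_cast
        ring
      rw [hfe, zero_add]
      exact hh
  have hpq : p = q := hp.hasFPowerSeriesAt.eq_formalMultilinearSeries hq.hasFPowerSeriesAt
  have hk := congrFun hpq k
  have hz : ((((h k).eval x / k.factorial : ℝ)) : ℂ)
      = ((s⁻¹ : ℝ) : ℂ) * (∫ u : ℝ, ((x:ℂ) + u * Complex.I) ^ k * (Real.exp (-u ^ 2 / 2) : ℂ))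
        / (k.factorial : ℂ) := by
    have := congrFun (congrArg DFunLike.coe hk) (fun _ => (1:ℝ))
    simpa [hp_def, hq_def, ContinuousMultilinearMap.mkPiRing_apply] using this
  have hkne : ((k.factorial : ℕ) : ℂ) ≠ 0 := Nat.cast_ne_zero.mpr k.factorial_ne_zero
  calc (((h k).eval x : ℝ) : ℂ)
      = ((((h k).eval x / k.factorial : ℝ)) : ℂ) * (k.factorial : ℂ) := by
        push_cast
        rw [div_mul_cancel₀ _ hkne]
    _ = ((s⁻¹ : ℝ) : ℂ)
          * (∫ u : ℝ, ((x:ℂ) + u * Complex.I) ^ k * (Real.exp (-u ^ 2 / 2) : ℂ))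
          / (k.factorial : ℂ) * (k.factorial : ℂ) := by rw [hz]
    _ = ((s⁻¹ : ℝ) : ℂ)
          * ∫ u : ℝ, ((x:ℂ) + u * Complex.I) ^ k * (Real.exp (-u ^ 2 / 2) : ℂ) :=
        div_mul_cancel₀ _ hkne

lemma mehler_norm_F2 (x y t : ℝ) (k : ℕ) (z : ℝ × ℝ) :
    ‖((x:ℂ) + z.1 * Complex.I) ^ k * (Real.exp (-z.1 ^ 2 / 2) : ℂ)
        * (((y:ℂ) + z.2 * Complex.I) ^ k * (Real.exp (-z.2 ^ 2 / 2) : ℂ))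
        * ((t:ℂ) ^ k / (k.factorial : ℂ))‖
      = (|t| * (‖(x:ℂ) + z.1 * Complex.I‖ * ‖(y:ℂ) + z.2 * Complex.I‖)) ^ k
          / (k.factorial : ℝ)
        * (Real.exp (-z.1 ^ 2 / 2) * Real.exp (-z.2 ^ 2 / 2)) := by
  rw [norm_mul, norm_mul, norm_mul, norm_mul, norm_div, norm_pow, norm_pow, norm_pow]
  simp only [Complex.norm_real, Real.norm_eq_abs, Complex.norm_natCast,
    _root_.abs_of_nonneg (Real.exp_pos _).le]
  rw [mul_pow, mul_pow]
  ring

lemma mehler_summable_2d (x y t : ℝ) (ht : |t| < 1) :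
    Summable (fun k : ℕ => ∫ z : ℝ × ℝ,
      ‖((x:ℂ) + z.1 * Complex.I) ^ k * (Real.exp (-z.1 ^ 2 / 2) : ℂ)
        * (((y:ℂ) + z.2 * Complex.I) ^ k * (Real.exp (-z.2 ^ 2 / 2) : ℂ))
        * ((t:ℂ) ^ k / (k.factorial : ℂ))‖
      ∂((volume : MeasureTheory.Measure ℝ).prod volume)) := by
  have hb : 0 < (1 - |t|) / 2 := by linarith
  have hFint : ∀ k : ℕ, Integrable (fun z : ℝ × ℝ =>
      ((x:ℂ) + z.1 * Complex.I) ^ k * (Real.exp (-z.1 ^ 2 / 2) : ℂ)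
        * (((y:ℂ) + z.2 * Complex.I) ^ k * (Real.exp (-z.2 ^ 2 / 2) : ℂ))
        * ((t:ℂ) ^ k / (k.factorial : ℂ)))
      ((volume : MeasureTheory.Measure ℝ).prod volume) :=
    fun k => ((mehler_int_phi x k).mul_prod (mehler_int_phi y k)).mul_const _
  have hGint : Integrable (fun z : ℝ × ℝ =>
      (Real.exp (|t| * x ^ 2 / 2) * Real.exp (-((1 - |t|) / 2) * z.1 ^ 2))
      * (Real.exp (|t| * y ^ 2 / 2) * Real.exp (-((1 - |t|) / 2) * z.2 ^ 2)))
      ((volume : MeasureTheory.Measure ℝ).prod volume) :=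
    ((integrable_exp_neg_mul_sq hb).const_mul _).mul_prod
      ((integrable_exp_neg_mul_sq hb).const_mul _)
  refine summable_of_sum_range_le
    (c := ∫ z : ℝ × ℝ, (Real.exp (|t| * x ^ 2 / 2) * Real.exp (-((1 - |t|) / 2) * z.1 ^ 2))
      * (Real.exp (|t| * y ^ 2 / 2) * Real.exp (-((1 - |t|) / 2) * z.2 ^ 2))
      ∂((volume : MeasureTheory.Measure ℝ).prod volume))
    (fun k => integral_nonneg fun z => norm_nonneg _) (fun n => ?_)
  rw [← integral_finset_sum _ fun k _ => (hFint k).norm]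
  refine integral_mono (integrable_finset_sum _ fun k _ => (hFint k).norm) hGint fun z => ?_
  set a : ℝ := ‖(x:ℂ) + z.1 * Complex.I‖ with ha
  set b : ℝ := ‖(y:ℂ) + z.2 * Complex.I‖ with hbdef
  have ha0 : 0 ≤ a := norm_nonneg _
  have hb0 : 0 ≤ b := norm_nonneg _
  have habsq : a ^ 2 = x ^ 2 + z.1 ^ 2 := mehler_sq_norm x z.1
  have hbbsq : b ^ 2 = y ^ 2 + z.2 ^ 2 := mehler_sq_norm y z.2
  calc (∑ k ∈ Finset.range n,
        ‖((x:ℂ) + z.1 * Complex.I) ^ k * (Real.exp (-z.1 ^ 2 / 2) : ℂ)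
        * (((y:ℂ) + z.2 * Complex.I) ^ k * (Real.exp (-z.2 ^ 2 / 2) : ℂ))
        * ((t:ℂ) ^ k / (k.factorial : ℂ))‖)
      = (∑ k ∈ Finset.range n, (|t| * (a * b)) ^ k / (k.factorial : ℝ))
          * (Real.exp (-z.1 ^ 2 / 2) * Real.exp (-z.2 ^ 2 / 2)) := by
        rw [Finset.sum_mul]
        exact Finset.sum_congr rfl fun k _ => mehler_norm_F2 x y t k z
    _ ≤ Real.exp (|t| * (a * b)) * (Real.exp (-z.1 ^ 2 / 2) * Real.exp (-z.2 ^ 2 / 2)) := by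
        apply mul_le_mul_of_nonneg_right (Real.sum_le_exp_of_nonneg (by positivity) n)
        positivity
    _ ≤ Real.exp (|t| * ((x ^ 2 + z.1 ^ 2 + y ^ 2 + z.2 ^ 2) / 2))
          * (Real.exp (-z.1 ^ 2 / 2) * Real.exp (-z.2 ^ 2 / 2)) := by
        apply mul_le_mul_of_nonneg_right _ (by positivity)
        apply Real.exp_le_exp.mpr
        apply mul_le_mul_of_nonneg_left _ (abs_nonneg t)
        nlinarith [sq_nonneg (a - b)]
    _ = (Real.exp (|t| * x ^ 2 / 2) * Real.exp (-((1 - |t|) / 2) * z.1 ^ 2))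
      * (Real.exp (|t| * y ^ 2 / 2) * Real.exp (-((1 - |t|) / 2) * z.2 ^ 2)) := by
        simp only [← Real.exp_add]
        congr 1
        ring

lemma mehler_int_big (x y t : ℝ) (ht : |t| < 1) :
    Integrable (fun z : ℝ × ℝ =>
      Complex.exp ((t:ℂ) * ((x:ℂ) + z.1 * Complex.I) * ((y:ℂ) + z.2 * Complex.I))
        * ((Real.exp (-z.1 ^ 2 / 2) : ℂ) * (Real.exp (-z.2 ^ 2 / 2) : ℂ)))
      ((volume : MeasureTheory.Measure ℝ).prod volume) := by
  have hb : 0 < (1 - |t|) / 2 := by linarith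
  have hGint : Integrable (fun z : ℝ × ℝ =>
      (Real.exp (|t| * (x ^ 2 + y ^ 2) / 2) * Real.exp (-((1 - |t|) / 2) * z.1 ^ 2))
      * Real.exp (-((1 - |t|) / 2) * z.2 ^ 2))
      ((volume : MeasureTheory.Measure ℝ).prod volume) :=
    ((integrable_exp_neg_mul_sq hb).const_mul _).mul_prod (integrable_exp_neg_mul_sq hb)
  refine hGint.mono' ?_ ?_
  · apply Continuous.aestronglyMeasurable
    fun_prop
  · refine Filter.Eventually.of_forall fun z => ?_
    rw [norm_mul, norm_mul, Complex.norm_real, Complex.norm_real, Real.norm_eq_abs,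
      Real.norm_eq_abs, _root_.abs_of_nonneg (Real.exp_pos _).le,
      _root_.abs_of_nonneg (Real.exp_pos _).le, Complex.norm_exp]
    have hre : ((t:ℂ) * ((x:ℂ) + z.1 * Complex.I) * ((y:ℂ) + z.2 * Complex.I)).re
        = t * (x * y - z.1 * z.2) := by
      simp [Complex.mul_re, Complex.mul_im]
      ring
    rw [hre, ← Real.exp_add, ← Real.exp_add, ← Real.exp_add, ← Real.exp_add]
    apply Real.exp_le_exp.mpr
    have h1 : t * (x * y) ≤ |t| * (x ^ 2 + y ^ 2) / 2 := by
      have : t * (x * y) ≤ |t| * |x * y| := by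
        calc t * (x * y) ≤ |t * (x * y)| := le_abs_self _
        _ = |t| * |x * y| := abs_mul _ _
      refine this.trans ?_
      rw [abs_mul]
      nlinarith [sq_nonneg (|x| - |y|), abs_nonneg t, abs_nonneg x, abs_nonneg y,
        _root_.sq_abs x, _root_.sq_abs y]
    have h2 : t * (-(z.1 * z.2)) ≤ |t| * (z.1 ^ 2 + z.2 ^ 2) / 2 := by
      have : t * (-(z.1 * z.2)) ≤ |t| * |z.1 * z.2| := by
        calc t * (-(z.1 * z.2)) ≤ |t * (-(z.1 * z.2))| := le_abs_self _
        _ = |t| * |z.1 * z.2| := by rw [abs_mul, abs_neg]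
      refine this.trans ?_
      rw [abs_mul]
      nlinarith [sq_nonneg (|z.1| - |z.2|), abs_nonneg t, abs_nonneg z.1, abs_nonneg z.2,
        _root_.sq_abs z.1, _root_.sq_abs z.2]
    nlinarith [h1, h2]

lemma mehler_hasSum_2d (x y t : ℝ) (ht : |t| < 1) :
    HasSum (fun k : ℕ =>
      (∫ u : ℝ, ((x:ℂ) + u * Complex.I) ^ k * (Real.exp (-u ^ 2 / 2) : ℂ))
      * (∫ v : ℝ, ((y:ℂ) + v * Complex.I) ^ k * (Real.exp (-v ^ 2 / 2) : ℂ))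
      * ((t:ℂ) ^ k / (k.factorial : ℂ)))
      (∫ z : ℝ × ℝ,
        Complex.exp ((t:ℂ) * ((x:ℂ) + z.1 * Complex.I) * ((y:ℂ) + z.2 * Complex.I))
          * ((Real.exp (-z.1 ^ 2 / 2) : ℂ) * (Real.exp (-z.2 ^ 2 / 2) : ℂ))
        ∂((volume : MeasureTheory.Measure ℝ).prod volume)) := by
  have hFint : ∀ k : ℕ, Integrable (fun z : ℝ × ℝ =>
      ((x:ℂ) + z.1 * Complex.I) ^ k * (Real.exp (-z.1 ^ 2 / 2) : ℂ)
        * (((y:ℂ) + z.2 * Complex.I) ^ k * (Real.exp (-z.2 ^ 2 / 2) : ℂ))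
        * ((t:ℂ) ^ k / (k.factorial : ℂ)))
      ((volume : MeasureTheory.Measure ℝ).prod volume) :=
    fun k => ((mehler_int_phi x k).mul_prod (mehler_int_phi y k)).mul_const _
  have key := hasSum_integral_of_summable_integral_norm
    (μ := (volume : MeasureTheory.Measure ℝ).prod volume)
    (F := fun (k : ℕ) (z : ℝ × ℝ) =>
      ((x:ℂ) + z.1 * Complex.I) ^ k * (Real.exp (-z.1 ^ 2 / 2) : ℂ)
        * (((y:ℂ) + z.2 * Complex.I) ^ k * (Real.exp (-z.2 ^ 2 / 2) : ℂ))
        * ((t:ℂ) ^ k / (k.factorial : ℂ)))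
    hFint (mehler_summable_2d x y t ht)
  have h1 : ∀ k : ℕ, (∫ z : ℝ × ℝ,
      ((x:ℂ) + z.1 * Complex.I) ^ k * (Real.exp (-z.1 ^ 2 / 2) : ℂ)
        * (((y:ℂ) + z.2 * Complex.I) ^ k * (Real.exp (-z.2 ^ 2 / 2) : ℂ))
        * ((t:ℂ) ^ k / (k.factorial : ℂ))
      ∂((volume : MeasureTheory.Measure ℝ).prod volume))
      = (∫ u : ℝ, ((x:ℂ) + u * Complex.I) ^ k * (Real.exp (-u ^ 2 / 2) : ℂ))
      * (∫ v : ℝ, ((y:ℂ) + v * Complex.I) ^ k * (Real.exp (-v ^ 2 / 2) : ℂ))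
      * ((t:ℂ) ^ k / (k.factorial : ℂ)) := by
    intro k
    rw [integral_mul_const]
    congr 1
    exact integral_prod_mul
      (f := fun u : ℝ => ((x:ℂ) + u * Complex.I) ^ k * (Real.exp (-u ^ 2 / 2) : ℂ))
      (g := fun v : ℝ => ((y:ℂ) + v * Complex.I) ^ k * (Real.exp (-v ^ 2 / 2) : ℂ))
  have ht2 : ∀ z : ℝ × ℝ, (∑' k : ℕ,
      ((x:ℂ) + z.1 * Complex.I) ^ k * (Real.exp (-z.1 ^ 2 / 2) : ℂ)
        * (((y:ℂ) + z.2 * Complex.I) ^ k * (Real.exp (-z.2 ^ 2 / 2) : ℂ))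
        * ((t:ℂ) ^ k / (k.factorial : ℂ)))
      = Complex.exp ((t:ℂ) * ((x:ℂ) + z.1 * Complex.I) * ((y:ℂ) + z.2 * Complex.I))
          * ((Real.exp (-z.1 ^ 2 / 2) : ℂ) * (Real.exp (-z.2 ^ 2 / 2) : ℂ)) := by
    intro z
    have hz := NormedSpace.expSeries_div_hasSum_exp
      ((t:ℂ) * ((x:ℂ) + z.1 * Complex.I) * ((y:ℂ) + z.2 * Complex.I))
    rw [← Complex.exp_eq_exp_ℂ] at hz
    have hz2 := hz.mul_right ((Real.exp (-z.1 ^ 2 / 2) : ℂ) * (Real.exp (-z.2 ^ 2 / 2) : ℂ))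
    have hfe : (fun k : ℕ =>
        ((t:ℂ) * ((x:ℂ) + z.1 * Complex.I) * ((y:ℂ) + z.2 * Complex.I)) ^ k
          / (k.factorial : ℂ)
          * ((Real.exp (-z.1 ^ 2 / 2) : ℂ) * (Real.exp (-z.2 ^ 2 / 2) : ℂ)))
        = fun k : ℕ =>
        ((x:ℂ) + z.1 * Complex.I) ^ k * (Real.exp (-z.1 ^ 2 / 2) : ℂ)
        * (((y:ℂ) + z.2 * Complex.I) ^ k * (Real.exp (-z.2 ^ 2 / 2) : ℂ))
        * ((t:ℂ) ^ k / (k.factorial : ℂ)) := by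
      funext k
      rw [mul_pow, mul_pow]
      ring
    rw [hfe] at hz2
    exact hz2.tsum_eq
  rw [funext h1] at key
  rwa [MeasureTheory.integral_congr_ae (Filter.Eventually.of_forall ht2)] at key

lemma mehler_gauss (x y t : ℝ) (ht : |t| < 1) :
    (∫ z : ℝ × ℝ,
        Complex.exp ((t:ℂ) * ((x:ℂ) + z.1 * Complex.I) * ((y:ℂ) + z.2 * Complex.I))
          * ((Real.exp (-z.1 ^ 2 / 2) : ℂ) * (Real.exp (-z.2 ^ 2 / 2) : ℂ))
        ∂((volume : MeasureTheory.Measure ℝ).prod volume))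
    = ((2 * π : ℝ) : ℂ) * (((Real.sqrt (1 - t ^ 2))⁻¹
        * Real.exp (-((t ^ 2 * x ^ 2 / 2 - t * x * y + t ^ 2 * y ^ 2 / 2) / (1 - t ^ 2))) : ℝ)
        : ℂ) := by
  have h1t : 0 < 1 - t ^ 2 := by nlinarith [_root_.sq_abs t, abs_nonneg t]
  rw [MeasureTheory.integral_prod _ (mehler_int_big x y t ht)]
  have inner : ∀ u : ℝ, (∫ v : ℝ,
      Complex.exp ((t:ℂ) * ((x:ℂ) + u * Complex.I) * ((y:ℂ) + v * Complex.I))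
        * ((Real.exp (-u ^ 2 / 2) : ℂ) * (Real.exp (-v ^ 2 / 2) : ℂ)))
      = ((Real.sqrt (2 * π) : ℝ) : ℂ)
        * Complex.exp ((((t ^ 2 - 1) / 2 : ℝ) : ℂ) * (u:ℂ) ^ 2
            + (Complex.I * ((t * y - t ^ 2 * x : ℝ) : ℂ)) * (u:ℂ)
            + ((t * x * y - t ^ 2 * x ^ 2 / 2 : ℝ) : ℂ)) := by
    intro u
    have hfun : ∀ v : ℝ,
        Complex.exp ((t:ℂ) * ((x:ℂ) + u * Complex.I) * ((y:ℂ) + v * Complex.I))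
          * ((Real.exp (-u ^ 2 / 2) : ℂ) * (Real.exp (-v ^ 2 / 2) : ℂ))
        = Complex.exp ((-(1/2) : ℂ) * (v:ℂ) ^ 2
            + (Complex.I * (t:ℂ) * ((x:ℂ) + u * Complex.I)) * (v:ℂ)
            + ((t:ℂ) * ((x:ℂ) + u * Complex.I) * (y:ℂ) - (u:ℂ) ^ 2 / 2)) := by
      intro v
      rw [Complex.ofReal_exp, Complex.ofReal_exp, ← Complex.exp_add, ← Complex.exp_add]
      congr 1
      push_cast
      ring
    simp_rw [hfun]
    rw [integral_cexp_quadratic (by norm_num : (-(1/2) : ℂ).re < 0)]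
    have e1 : ((π : ℂ) / -(-(1/2) : ℂ)) ^ ((1:ℂ)/2) = ((Real.sqrt (2 * π) : ℝ) : ℂ) := by
      have e0 : ((π : ℂ) / -(-(1/2) : ℂ)) = ((2 * π : ℝ) : ℂ) := by push_cast; ring
      rw [e0, Real.sqrt_eq_rpow, Complex.ofReal_cpow (by positivity : (0:ℝ) ≤ 2 * π)]
      norm_num
    have hsq : ((x:ℂ) + (u:ℂ) * Complex.I) ^ 2
        = ((x:ℂ) ^ 2 - (u:ℂ) ^ 2) + 2 * (x:ℂ) * (u:ℂ) * Complex.I := by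
      rw [add_sq, mul_pow, Complex.I_sq]
      ring
    have hc : (Complex.I * (t:ℂ) * ((x:ℂ) + (u:ℂ) * Complex.I)) ^ 2
        = -((t:ℂ) ^ 2 * (((x:ℂ) ^ 2 - (u:ℂ) ^ 2) + 2 * (x:ℂ) * (u:ℂ) * Complex.I)) := by
      rw [mul_pow, mul_pow, Complex.I_sq, hsq]
      ring
    have e3 : (t:ℂ) * ((x:ℂ) + u * Complex.I) * (y:ℂ) - (u:ℂ) ^ 2 / 2
        - (Complex.I * (t:ℂ) * ((x:ℂ) + u * Complex.I)) ^ 2 / (4 * (-(1/2) : ℂ))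
        = (((t ^ 2 - 1) / 2 : ℝ) : ℂ) * (u:ℂ) ^ 2
            + (Complex.I * ((t * y - t ^ 2 * x : ℝ) : ℂ)) * (u:ℂ)
            + ((t * x * y - t ^ 2 * x ^ 2 / 2 : ℝ) : ℂ) := by
      rw [hc]
      push_cast
      ring
    rw [e3, show (1/2 : ℂ) = (1:ℂ)/2 from rfl, e1]
  simp_rw [inner]
  rw [MeasureTheory.integral_const_mul]
  have hb' : ((((t ^ 2 - 1) / 2 : ℝ) : ℂ)).re < 0 := by
    rw [Complex.ofReal_re]
    linarith
  rw [integral_cexp_quadratic hb']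
  have e4 : ((π : ℂ) / -(((t ^ 2 - 1) / 2 : ℝ) : ℂ)) ^ ((1:ℂ)/2)
      = ((Real.sqrt (2 * π / (1 - t ^ 2)) : ℝ) : ℂ) := by
    have e0 : ((π : ℂ) / -(((t ^ 2 - 1) / 2 : ℝ) : ℂ)) = ((2 * π / (1 - t ^ 2) : ℝ) : ℂ) := by
      rw [← Complex.ofReal_neg, ← Complex.ofReal_div]
      congr 1
      field_simp [(by linarith : t ^ 2 - 1 < 0).ne, h1t.ne']
      ring
    rw [e0, Real.sqrt_eq_rpow, Complex.ofReal_cpow (by positivity : (0:ℝ) ≤ 2 * π / (1 - t ^ 2))]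
    norm_num
  have hc' : (Complex.I * ((t * y - t ^ 2 * x : ℝ) : ℂ)) ^ 2
      = -((((t * y - t ^ 2 * x) ^ 2 : ℝ)) : ℂ) := by
    rw [mul_pow, Complex.I_sq]
    push_cast
    ring
  have hne : ((1 : ℂ) - (t:ℂ) ^ 2) ≠ 0 := by
    intro hcontra
    refine Complex.ofReal_ne_zero.mpr h1t.ne' ?_
    push_cast
    linear_combination hcontra
  have hne' : ((t:ℂ) ^ 2 - 1) ≠ 0 := by
    intro hcontra
    refine hne ?_
    linear_combination -hcontra
  have e5 : ((t * x * y - t ^ 2 * x ^ 2 / 2 : ℝ) : ℂ)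
      - (Complex.I * ((t * y - t ^ 2 * x : ℝ) : ℂ)) ^ 2 / (4 * (((t ^ 2 - 1) / 2 : ℝ) : ℂ))
      = ((-((t ^ 2 * x ^ 2 / 2 - t * x * y + t ^ 2 * y ^ 2 / 2) / (1 - t ^ 2)) : ℝ) : ℂ) := by
    rw [hc']
    push_cast
    field_simp [hne, hne']
    ring
  rw [e5, show (1/2 : ℂ) = (1:ℂ)/2 from rfl, e4, ← Complex.ofReal_exp, ← Complex.ofReal_mul,
    ← Complex.ofReal_mul, ← Complex.ofReal_mul]
  congr 1
  rw [← mul_assoc, ← Real.sqrt_mul (by positivity : (0:ℝ) ≤ 2 * π)]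
  have e6 : (2 * π) * (2 * π / (1 - t ^ 2)) = ((2 * π) / Real.sqrt (1 - t ^ 2)) ^ 2 := by
    rw [div_pow, Real.sq_sqrt h1t.le]
    ring
  rw [e6, Real.sqrt_sq (by positivity : (0:ℝ) ≤ (2 * π) / Real.sqrt (1 - t ^ 2))]
  rw [div_eq_mul_inv]
  ring

/-- Mehler-type generating function for the probabilists' Hermite polynomials
(defined via `∑ₖ h_k(x) tᵏ/k! = exp(tx - t²/2)`): for `|t| < 1` and real `x, y`,
`∑ₖ h_k(x) h_k(y) tᵏ/k! = (1-t²)^{-1/2} exp(-(t²x²/2 - txy + t²y²/2)/(1-t²))`,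
the series being convergent for `|t| < 1`. -/
theorem stmt_19 (h : ℕ → Polynomial ℝ)
    (hgen : ∀ x t : ℝ, HasSum (fun k : ℕ => (h k).eval x * t ^ k / (k.factorial : ℝ))
      (Real.exp (t * x - t ^ 2 / 2))) :
    ∀ x y t : ℝ, |t| < 1 →
      HasSum (fun k : ℕ => (h k).eval x * (h k).eval y * t ^ k / (k.factorial : ℝ))
        ((Real.sqrt (1 - t ^ 2))⁻¹ *
          Real.exp (-((t ^ 2 * x ^ 2 / 2 - t * x * y + t ^ 2 * y ^ 2 / 2) / (1 - t ^ 2)))) := by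
  intro x y t ht
  set s : ℝ := Real.sqrt (2 * π) with hs_def
  have hs : 0 < s := Real.sqrt_pos.mpr (by positivity)
  have hss : s * s = 2 * π := Real.mul_self_sqrt (by positivity)
  have key := mehler_hasSum_2d x y t ht
  rw [mehler_gauss x y t ht] at key
  have key2 := key.mul_left ((((2 * π)⁻¹ : ℝ)) : ℂ)
  rw [← mul_assoc, ← Complex.ofReal_mul,
    inv_mul_cancel₀ (by positivity : (2 * π : ℝ) ≠ 0), Complex.ofReal_one, one_mul] at key2
  have h1 : (2 * (π:ℂ))⁻¹ * ((s : ℂ) * (s : ℂ)) = 1 := by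
    rw [← Complex.ofReal_mul, hss]
    push_cast
    have hπ : (π:ℂ) ≠ 0 := Complex.ofReal_ne_zero.mpr Real.pi_ne_zero
    field_simp
  have hx' : ∀ k : ℕ, (∫ u : ℝ, ((x:ℂ) + u * Complex.I) ^ k * (Real.exp (-u ^ 2 / 2) : ℂ))
      = (s : ℂ) * (((h k).eval x : ℝ) : ℂ) := by
    intro k
    rw [mehler_rep h hgen x k, ← mul_assoc, ← Complex.ofReal_mul,
      mul_inv_cancel₀ hs.ne', Complex.ofReal_one, one_mul]
  have hy' : ∀ k : ℕ, (∫ v : ℝ, ((y:ℂ) + v * Complex.I) ^ k * (Real.exp (-v ^ 2 / 2) : ℂ))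
      = (s : ℂ) * (((h k).eval y : ℝ) : ℂ) := by
    intro k
    rw [mehler_rep h hgen y k, ← mul_assoc, ← Complex.ofReal_mul,
      mul_inv_cancel₀ hs.ne', Complex.ofReal_one, one_mul]
  have hterm : (fun k : ℕ => (((2 * π)⁻¹ : ℝ) : ℂ)
      * ((∫ u : ℝ, ((x:ℂ) + u * Complex.I) ^ k * (Real.exp (-u ^ 2 / 2) : ℂ))
        * (∫ v : ℝ, ((y:ℂ) + v * Complex.I) ^ k * (Real.exp (-v ^ 2 / 2) : ℂ))
        * ((t:ℂ) ^ k / (k.factorial : ℂ))))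
      = fun k : ℕ => (((h k).eval x * (h k).eval y * t ^ k / (k.factorial : ℝ) : ℝ) : ℂ) := by
    funext k
    rw [hx' k, hy' k]
    push_cast
    linear_combination ((((h k).eval x : ℝ) : ℂ) * (((h k).eval y : ℝ) : ℂ)
      * (t:ℂ) ^ k / ((k.factorial : ℕ) : ℂ)) * h1
  rw [hterm] at key2
  exact Complex.hasSum_ofReal.mp key2
end
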